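/- arXiv:1905.02246 — 11 statements merged into one kernel-verified Lean document; each statement's English description precedes it below -/
import Mathlib

section
/- Let D be a division ring and Δ a division subring of D. If σ is a ring automorphism of D such that x⁻¹σ(x) ∈ Δ for all x ∈ D*, then D = Δ or σ = id. -/
/-- If `D` is a division ring, `Δ` a division subring, and `σ` a ring automorphism of `D`
such that `x⁻¹ * σ x ∈ Δ` for every nonzero `x`, then `D = Δ` or `σ` is the identity. -/
theorem stmt0 {D : Type*} [DivisionRing D] (Δ : Subfield D) (σ : D ≃+* D)
    (h : ∀ x : D, x ≠ 0 → x⁻¹ * σ x ∈ Δ) :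
    (∀ d : D, d ∈ Δ) ∨ (∀ x : D, σ x = x) := by
  by_cases hall : ∀ d : D, d ∈ Δ
  · exact Or.inl hall
  · right
    push_neg at hall
    obtain ⟨a, ha⟩ := hall
    -- σ fixes every element outside Δ
    have key : ∀ b : D, b ∉ Δ → σ b = b := by
      intro b hb
      have hb0 : b ≠ 0 := fun h0 => hb (h0 ▸ Δ.zero_mem)
      have hb1 : b + 1 ≠ 0 := by
        intro h0
        apply hb
        rw [eq_neg_of_add_eq_zero_left h0]
        exact Δ.neg_mem Δ.one_mem
      have hc := h b hb0
      have hc' := h (b + 1) hb1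
      set c : D := b⁻¹ * σ b with hcdef
      set c' : D := (b + 1)⁻¹ * σ (b + 1) with hc'def
      have hσb : σ b = b * c := by
        rw [hcdef, ← mul_assoc, mul_inv_cancel₀ hb0, one_mul]
      have hσb1 : σ (b + 1) = (b + 1) * c' := by
        rw [hc'def, ← mul_assoc, mul_inv_cancel₀ hb1, one_mul]
      have heq : b * (c - c') = c' - 1 := by
        have h2 : (b + 1) * c' = b * c + 1 := by
          rw [← hσb1, ← hσb, map_add, map_one]
        rw [add_mul, one_mul] at h2
        rw [mul_sub, sub_eq_sub_iff_add_eq_add, add_comm c' (b * c')]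
        exact h2.symm
      have hcc : c = c' := by
        by_contra hne
        apply hb
        have hinv : b = (c' - 1) * (c - c')⁻¹ := by
          rw [← heq, mul_assoc, mul_inv_cancel₀ (sub_ne_zero.mpr hne), mul_one]
        rw [hinv]
        exact Δ.mul_mem (Δ.sub_mem hc' Δ.one_mem)
          (Δ.inv_mem (Δ.sub_mem hc hc'))
      have hc1 : c = 1 := by
        rw [hcc]
        have h0 : c' - 1 = 0 := by rw [← heq, hcc, sub_self, mul_zero]
        exact sub_eq_zero.mp h0
      rw [hσb, hc1, mul_one]
    intro x
    by_cases hx : x ∈ Δ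
    · have hax : a + x ∉ Δ := fun hm => ha (by
        rw [← add_sub_cancel_right a x]
        exact Δ.sub_mem hm hx)
      have h1 := key (a + x) hax
      have h2 := key a ha
      rw [map_add, h2] at h1
      exact add_left_cancel h1
    · exact key x hx
end

section
/- Let D be a division ring with center F and L a maximal subfield of D (i.e., the centralizer of L in D equals L). If there exists a nontrivial field automorphism σ of L such that x⁻¹σ(x) ∈ F for every nonzero x ∈ L, then D is commutative. -/
/-!
Write `c(x) = x⁻¹ σ(x)`. If `σ x ≠ x`, comparing `σ (x + 1) = σ x + 1` with
`σ (x + 1) = (x + 1) c(x + 1)` gives `x (c(x) - c(x + 1)) = c(x + 1) - 1`, and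
`c(x) ≠ c(x + 1)`, so `x` is a quotient of central elements, hence central.
Elements fixed by `σ` are differences of two non-fixed ones, so all of `L` is central;
then every element of `D` commutes with `L`, lies in `L` by maximality, and is central.
-/

def Subfield.center (D : Type*) [DivisionRing D] : Subfield D :=
  { Subring.center D with inv_mem' := fun _ => Set.inv_mem_center }

section

variable {K : Type*} [DivisionRing K] {S : Subfield K} {σ : K ≃+* K}

theorem Subfield.mem_of_apply_ne_self (h : ∀ x : K, x ≠ 0 → x⁻¹ * σ x ∈ S) {x : K}
    (hx : σ x ≠ x) : x ∈ S := by
  have hx0 : x ≠ 0 := by rintro rfl; exact hx (map_zero σ)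
  have hx1 : x + 1 ≠ 0 := by
    intro h1
    rw [eq_neg_of_add_eq_zero_left h1, map_neg, map_one] at hx
    exact hx rfl
  set c := x⁻¹ * σ x
  set d := (x + 1)⁻¹ * σ (x + 1)
  have hc : σ x = x * c := (mul_inv_cancel_left₀ hx0 _).symm
  have hd : σ (x + 1) = (x + 1) * d := (mul_inv_cancel_left₀ hx1 _).symm
  have key : x * (c - d) = d - 1 := by
    rw [map_add, map_one, hc, add_mul, one_mul] at hd
    rw [mul_sub, sub_eq_sub_iff_add_eq_add, hd, add_comm]
  have hcd : c - d ≠ 0 := by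
    intro hcd
    rw [hcd, mul_zero, eq_comm, sub_eq_zero] at key
    rw [sub_eq_zero, key] at hcd
    exact hx (by rw [hc, hcd, mul_one])
  rw [(eq_mul_inv_iff_mul_eq₀ hcd).mpr key]
  exact mul_mem (sub_mem (h _ hx1) (one_mem _)) (inv_mem (sub_mem (h _ hx0) (h _ hx1)))

theorem Subfield.eq_top_of_inv_mul_apply_mem (h : ∀ x : K, x ≠ 0 → x⁻¹ * σ x ∈ S)
    (hσ : ∃ a, σ a ≠ a) : S = ⊤ := by
  obtain ⟨a, ha⟩ := hσ
  refine eq_top_iff.mpr fun x _ => ?_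
  by_cases hxσ : σ x = x
  · have hxa : σ (x + a) ≠ x + a := by
      rw [map_add, hxσ]
      exact fun e => ha (add_left_cancel e)
    simpa using sub_mem (mem_of_apply_ne_self h hxa) (mem_of_apply_ne_self h ha)
  · exact mem_of_apply_ne_self h hxσ

end

theorem Set.center_eq_univ_of_centralizer_subset {M : Type*} [Semigroup M] {S : Set M}
    (hmax : S.centralizer ⊆ S) (hS : S ⊆ Set.center M) : Set.center M = Set.univ :=
  Set.eq_univ_of_forall fun _ => hS (hmax (Set.centralizer_eq_top_iff_subset.mpr hS ▸ trivial))

theorem stmt1_general {D : Type*} [DivisionRing D] (L : Subfield D)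
    (hmax : ∀ d : D, (∀ x ∈ L, d * x = x * d) → d ∈ L)
    (σ : L ≃+* L) (hσ : ∃ x : L, σ x ≠ x)
    (h : ∀ x : L, x ≠ 0 → ((x⁻¹ * σ x : L) : D) ∈ Subring.center D) :
    ∀ a b : D, a * b = b * a := by
  have htop : (Subfield.center D).comap L.subtype = ⊤ :=
    Subfield.eq_top_of_inv_mul_apply_mem h hσ
  have hL : (L : Set D) ⊆ Set.center D := fun x hx =>
    show (⟨x, hx⟩ : L) ∈ (Subfield.center D).comap L.subtype from htop ▸ Subfield.mem_top _
  have hcenter := Set.center_eq_univ_of_centralizer_subset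
    (fun d hd => hmax d fun x hx => (hd x hx).symm) hL
  intro a b
  exact Semigroup.mem_center_iff.mp (hcenter ▸ Set.mem_univ b) a

/-- Let `D` be a division ring with center `F` and `L` a maximal subfield of `D`
(i.e. the centralizer of `L` in `D` equals `L`). If there is a nontrivial automorphism
`σ` of `L` with `x⁻¹ * σ x ∈ F` for all nonzero `x ∈ L`, then `D` is commutative. -/
theorem stmt1 {D : Type*} [DivisionRing D] (L : Subfield D)
    (hcomm : ∀ x ∈ L, ∀ y ∈ L, x * y = y * x)
    (hmax : ∀ d : D, (∀ x ∈ L, d * x = x * d) → d ∈ L)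
    (σ : L ≃+* L) (hσ : ∃ x : L, σ x ≠ x)
    (h : ∀ x : L, x ≠ 0 → ((x⁻¹ * σ x : L) : D) ∈ Subring.center D) :
    ∀ a b : D, a * b = b * a :=
  stmt1_general L hmax σ hσ h
end

section
/- Let D be a division ring and K a subfield of D that is self-invariant, meaning the normalizer N_{D*}(K*) = {d ∈ D* : dK d⁻¹ ⊆ K} together with 0 equals K. Then K is a maximal subfield of D, i.e., any subfield of D containing K equals K. -/
theorem mem_of_forall_commute_of_self_invariant {D : Type*} [DivisionRing D] (K : Subfield D)
    (hself : ∀ d : D, d ∈ K ↔ d = 0 ∨ (d ≠ 0 ∧ ∀ k ∈ K, d * k * d⁻¹ ∈ K)) {t : D}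
    (ht : ∀ k ∈ K, t * k = k * t) : t ∈ K := by
  rw [hself]
  by_cases h0 : t = 0
  · exact Or.inl h0
  · refine Or.inr ⟨h0, fun k hk => ?_⟩
    rwa [ht k hk, mul_inv_cancel_right₀ h0]

theorem stmt2_general {D : Type*} [DivisionRing D] (K : Subfield D)
    (hself : ∀ d : D, d ∈ K ↔ d = 0 ∨ (d ≠ 0 ∧ ∀ k ∈ K, d * k * d⁻¹ ∈ K)) :
    ∀ T : Subfield D, (∀ x ∈ T, ∀ y ∈ T, x * y = y * x) → K ≤ T → T = K := by
  intro T hT hKT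
  refine le_antisymm (fun t ht => ?_) hKT
  exact mem_of_forall_commute_of_self_invariant K hself fun k hk => hT t ht k (hKT hk)

/-- A self-invariant subfield `K` of a division ring `D` (i.e. the normalizer of `K*` in `D*`
together with `0` equals `K`) is a maximal subfield with respect to inclusion. -/
theorem stmt2 {D : Type*} [DivisionRing D] (K : Subfield D)
    (hcomm : ∀ x ∈ K, ∀ y ∈ K, x * y = y * x)
    (hself : ∀ d : D, d ∈ K ↔ d = 0 ∨ (d ≠ 0 ∧ ∀ k ∈ K, d * k * d⁻¹ ∈ K)) :
    ∀ T : Subfield D, (∀ x ∈ T, ∀ y ∈ T, x * y = y * x) → K ≤ T → T = K :=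
  stmt2_general K hself
end

section
/- Let D be a noncommutative division ring containing a self-invariant maximal subfield K. Then D admits at least three pairwise distinct self-invariant maximal subfields. -/
/-!
Conjugates of a self-invariant maximal subfield `K` are again self-invariant maximal subfields,
and since `K` is its own normalizer, `c K c⁻¹ = c' K c'⁻¹` exactly when `c⁻¹ c' ∈ K`.
As `K` is commutative and `D` is not, some `d` lies outside `K`; then `d`, `1 + d` and
`d⁻¹ (1 + d) = d⁻¹ + 1` all lie outside `K`, so conjugating `K` by `1`, `d` and `1 + d`
gives three distinct subfields.
-/

/-- `K` is a self-invariant maximal subfield of the division ring `D`: it is commutative,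
it is its own centralizer, and its normalizer in `D*` together with `0` equals `K`. -/
def IsSelfInvMaxSubfield {D : Type*} [DivisionRing D] (K : Subfield D) : Prop :=
  (∀ x ∈ K, ∀ y ∈ K, x * y = y * x) ∧
  (∀ d : D, (∀ x ∈ K, d * x = x * d) → d ∈ K) ∧
  (∀ d : D, d ∈ K ↔ d = 0 ∨ (d ≠ 0 ∧ ∀ k ∈ K, d * k * d⁻¹ ∈ K))

namespace Subfield

variable {M D : Type*} [Group M] [DivisionRing D] [MulSemiringAction M D]

instance pointwiseMulAction : MulAction M (Subfield D) where
  smul g S := S.comap (MulSemiringAction.toRingHom M D g⁻¹)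
  one_smul S := ext fun x => show (1 : M)⁻¹ • x ∈ S ↔ x ∈ S by rw [inv_one, one_smul]
  mul_smul g h S := ext fun x =>
    show (g * h)⁻¹ • x ∈ S ↔ h⁻¹ • g⁻¹ • x ∈ S by rw [mul_inv_rev, mul_smul]

theorem mem_smul_iff {g : M} {S : Subfield D} {x : D} : x ∈ g • S ↔ g⁻¹ • x ∈ S := Iff.rfl

theorem conj_smul_eq_self_of_mem {S : Subfield D} {u : Dˣ} (hu : (u : D) ∈ S) :
    ConjAct.toConjAct u • S = S := by
  have hu' : ((u⁻¹ : Dˣ) : D) ∈ S := by simpa using inv_mem hu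
  ext y
  rw [mem_smul_iff, ← ConjAct.toConjAct_inv, ConjAct.units_smul_def, ConjAct.ofConjAct_toConjAct,
    inv_inv]
  refine ⟨fun hy => ?_, fun hy => mul_mem (mul_mem hu' hy) hu⟩
  simpa [mul_assoc] using mul_mem (mul_mem hu hy) hu'

end Subfield

namespace IsSelfInvMaxSubfield

variable {D E : Type*} [DivisionRing D] [DivisionRing E] {K : Subfield D}

theorem comap (hK : IsSelfInvMaxSubfield K) (σ : E ≃+* D) :
    IsSelfInvMaxSubfield (K.comap (σ : E →+* D)) := by
  obtain ⟨hcomm, hcent, hnorm⟩ := hK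
  simp only [IsSelfInvMaxSubfield, Subfield.mem_comap, RingHom.coe_coe]
  refine ⟨fun x hx y hy => σ.injective ?_, fun d hd => ?_, fun d => ?_⟩
  · simpa only [map_mul] using hcomm _ hx _ hy
  · refine hcent _ fun x hx => ?_
    obtain ⟨x, rfl⟩ := σ.surjective x
    simpa only [map_mul] using congrArg σ (hd x hx)
  · rw [hnorm, σ.surjective.forall]
    simp only [map_mul, map_inv₀, ne_eq, map_eq_zero_iff σ σ.injective]

theorem smul {M : Type*} [Group M] [MulSemiringAction M D] (hK : IsSelfInvMaxSubfield K) (g : M) :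
    IsSelfInvMaxSubfield (g • K) :=
  hK.comap (MulSemiringAction.toRingEquiv M D g⁻¹)

theorem mem_of_conj_smul_eq_self (hK : IsSelfInvMaxSubfield K) {u : Dˣ}
    (h : ConjAct.toConjAct u • K = K) : (u : D) ∈ K := by
  refine (hK.2.2 u).2 (Or.inr ⟨u.ne_zero, fun k hk => ?_⟩)
  rw [← h, Subfield.mem_smul_iff, ← ConjAct.toConjAct_inv, ConjAct.units_smul_def]
  simpa [mul_assoc] using hk

theorem conj_smul_eq_conj_smul_iff (hK : IsSelfInvMaxSubfield K) {u v : Dˣ} :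
    ConjAct.toConjAct u • K = ConjAct.toConjAct v • K ↔ ((u⁻¹ * v : Dˣ) : D) ∈ K := by
  rw [smul_eq_iff_eq_inv_smul, smul_smul, ← ConjAct.toConjAct_inv, ← map_mul, eq_comm]
  exact ⟨hK.mem_of_conj_smul_eq_self, Subfield.conj_smul_eq_self_of_mem⟩

end IsSelfInvMaxSubfield

/-- A noncommutative division ring containing a self-invariant maximal subfield contains
at least three pairwise distinct self-invariant maximal subfields. -/
theorem stmt4 {D : Type*} [DivisionRing D] (hnc : ∃ a b : D, a * b ≠ b * a)
    (K : Subfield D) (hK : IsSelfInvMaxSubfield K) :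
    ∃ K₁ K₂ K₃ : Subfield D, K₁ ≠ K₂ ∧ K₁ ≠ K₃ ∧ K₂ ≠ K₃ ∧
      IsSelfInvMaxSubfield K₁ ∧ IsSelfInvMaxSubfield K₂ ∧ IsSelfInvMaxSubfield K₃ := by
  obtain ⟨a, b, hab⟩ := hnc
  obtain ⟨d, hd⟩ : ∃ d, d ∉ K := not_forall.mp fun h => hab (hK.1 a (h a) b (h b))
  have hd0 : d ≠ 0 := fun h => hd (h ▸ zero_mem K)
  have hd1 : 1 + d ∉ K := by rwa [add_mem_cancel_left (one_mem K)]
  have hd10 : 1 + d ≠ 0 := fun h => hd1 (h ▸ zero_mem K)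
  have hdd1 : d⁻¹ * (1 + d) ∉ K := by
    rwa [mul_one_add, inv_mul_cancel₀ hd0, add_mem_cancel_right (one_mem K), inv_mem_iff]
  let u := Units.mk0 d hd0
  let v := Units.mk0 (1 + d) hd10
  refine ⟨K, ConjAct.toConjAct u • K, ConjAct.toConjAct v • K,
    fun h => hd (hK.mem_of_conj_smul_eq_self h.symm),
    fun h => hd1 (hK.mem_of_conj_smul_eq_self h.symm), ?_, hK, hK.smul _, hK.smul _⟩
  rw [Ne, hK.conj_smul_eq_conj_smul_iff]
  simpa [u, v] using hdd1
end

section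
/- Let D be a noncommutative division ring and K a maximal subfield of D. Then the normalizer N_{D*}(K*) is a proper subset of D*. -/
/-!
If every nonzero `d` normalizes `K`, take `b ∉ K` and `a ∈ K`. Conjugating `a` by `b` and by
`1 + b` gives `a₁, a₂ ∈ K` with `(a₁ - a₂) * b = a₂ - a`. Since `b ∉ K` this forces `a₁ = a₂`,
hence `a₂ = a` and `b` commutes with `a`. So every `b ∉ K` centralizes `K` and, `K` being its
own centralizer, lies in `K`: thus `K = D`, which is commutative, a contradiction.
-/

theorem sub_mul_eq_sub_of_conj {R : Type*} [Ring R] {a b a₁ a₂ : R}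
    (h₁ : a₁ * b = b * a) (h₂ : a₂ * (1 + b) = (1 + b) * a) :
    (a₁ - a₂) * b = a₂ - a := by
  have h₂' : a₂ + a₂ * b = a + b * a := by
    simpa only [mul_add, add_mul, mul_one, one_mul] using h₂
  rw [sub_mul, h₁, sub_eq_sub_iff_add_eq_add, add_comm, h₂', add_comm]

namespace Subfield

variable {D : Type*} [DivisionRing D] {K : Subfield D}

theorem commute_of_forall_conj_mem (hK : ∀ d : D, d ≠ 0 → ∀ k ∈ K, d * k * d⁻¹ ∈ K)
    {a b : D} (ha : a ∈ K) (hb : b ∉ K) : b * a = a * b := by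
  have hb₀ : b ≠ 0 := fun h => hb (h ▸ K.zero_mem)
  have hb₁ : 1 + b ≠ 0 := fun h => hb (eq_neg_of_add_eq_zero_right h ▸ K.neg_mem K.one_mem)
  set a₁ := b * a * b⁻¹
  set a₂ := (1 + b) * a * (1 + b)⁻¹
  have key : (a₁ - a₂) * b = a₂ - a :=
    sub_mul_eq_sub_of_conj (inv_mul_cancel_right₀ hb₀ _) (inv_mul_cancel_right₀ hb₁ _)
  have ha₁ : a₁ ∈ K := hK b hb₀ a ha
  have ha₂ : a₂ ∈ K := hK _ hb₁ a ha
  have h₁₂ : a₁ = a₂ := by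
    by_contra hne
    have hb' : b = (a₁ - a₂)⁻¹ * (a₂ - a) := by
      rw [← key, inv_mul_cancel_left₀ (sub_ne_zero.mpr hne)]
    exact hb (hb' ▸ K.mul_mem (K.inv_mem (K.sub_mem ha₁ ha₂)) (K.sub_mem ha₂ ha))
  have ha₂a : a₂ = a := by
    rwa [h₁₂, sub_self, zero_mul, eq_comm, sub_eq_zero] at key
  calc b * a = a₁ * b := (inv_mul_cancel_right₀ hb₀ _).symm
    _ = a * b := by rw [h₁₂, ha₂a]

theorem mem_of_forall_conj_mem (hK : ∀ d : D, d ≠ 0 → ∀ k ∈ K, d * k * d⁻¹ ∈ K)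
    (hmax : ∀ d : D, (∀ x ∈ K, d * x = x * d) → d ∈ K) (b : D) : b ∈ K := by
  by_contra hb
  exact hb (hmax b fun _ ha => commute_of_forall_conj_mem hK ha hb)

end Subfield

/-- If `D` is a noncommutative division ring and `K` a maximal subfield of `D`, then the
normalizer of `K*` in `D*` is a proper subset of `D*`: there is a nonzero `d` not
normalizing `K`. -/
theorem stmt5 {D : Type*} [DivisionRing D] (hnc : ∃ a b : D, a * b ≠ b * a)
    (K : Subfield D)
    (hcomm : ∀ x ∈ K, ∀ y ∈ K, x * y = y * x)
    (hmax : ∀ d : D, (∀ x ∈ K, d * x = x * d) → d ∈ K) :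
    ∃ d : D, d ≠ 0 ∧ ¬(∀ k ∈ K, d * k * d⁻¹ ∈ K) := by
  by_contra! hK
  obtain ⟨x, y, hxy⟩ := hnc
  have hall := Subfield.mem_of_forall_conj_mem hK hmax
  exact hxy (hcomm x (hall x) y (hall y))
end

section
/- Let G be a free group and h ∈ G a nontrivial element. Then the centralizer of h in G is the cyclic group generated by some element, and in particular is cyclic; moreover C_G(h) ⊇ ⟨h⟩. -/
open Subgroup

section Aux

/-- In a free group over a subsingleton type, every element is a power of a single element. -/
private lemma freeGroup_subsingleton_cyclic {ι : Type*} [Subsingleton ι] :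
    ∃ g : FreeGroup ι, ∀ x : FreeGroup ι, x ∈ Subgroup.zpowers g := by
  by_cases hne : Nonempty ι
  · obtain ⟨a⟩ := hne
    refine ⟨FreeGroup.of a, fun x => ?_⟩
    induction x with
    | C1 => exact Subgroup.one_mem _
    | of i => rw [Subsingleton.elim i a]; exact Subgroup.mem_zpowers _
    | inv_of i _ => rw [Subsingleton.elim i a]; exact Subgroup.inv_mem _ (Subgroup.mem_zpowers _)
    | mul x y hx hy => exact Subgroup.mul_mem _ hx hy
  · refine ⟨1, fun x => ?_⟩
    induction x with
    | C1 => exact Subgroup.one_mem _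
    | of i => exact absurd ⟨i⟩ hne
    | inv_of i _ => exact absurd ⟨i⟩ hne
    | mul x y hx hy => exact Subgroup.mul_mem _ hx hy

/-- A commutative free group is cyclic. -/
private lemma abelian_free_cyclic {H : Type*} [Group H] [IsFreeGroup H]
    (comm : ∀ x y : H, Commute x y) :
    ∃ g : H, ∀ x : H, x ∈ Subgroup.zpowers g := by
  classical
  set ι := IsFreeGroup.Generators H
  let e : H ≃* FreeGroup ι := IsFreeGroup.toFreeGroup H
  have hsub : Subsingleton ι := by
    by_contra hns
    obtain ⟨a, b, hab⟩ : ∃ a b : ι, a ≠ b := by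
      rw [not_subsingleton_iff_nontrivial] at hns
      obtain ⟨a, b, hab⟩ := hns
      exact ⟨a, b, hab⟩
    have hcomm : Commute (FreeGroup.of a : FreeGroup ι) (FreeGroup.of b) := by
      have := comm (e.symm (FreeGroup.of a)) (e.symm (FreeGroup.of b))
      have := this.map e.toMonoidHom
      simpa using this
    -- map to permutations of Fin 3 to get a contradiction
    let p : Equiv.Perm (Fin 3) := Equiv.swap 0 1
    let q : Equiv.Perm (Fin 3) := Equiv.swap 0 2
    let f : FreeGroup ι →* Equiv.Perm (Fin 3) :=
      FreeGroup.lift (fun i => if i = a then p else q)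
    have hfc : Commute p q := by
      have := hcomm.map f
      simpa [f, FreeGroup.lift_apply_of, if_neg (Ne.symm hab)] using this
    have h0 := DFunLike.congr_fun hfc.eq 0
    simp [p, q, Equiv.Perm.mul_apply, Equiv.swap_apply_def] at h0
  obtain ⟨g, hg⟩ := @freeGroup_subsingleton_cyclic ι hsub
  refine ⟨e.symm g, fun x => ?_⟩
  obtain ⟨n, hn⟩ := hg (e x)
  exact ⟨n, by simpa using congrArg e.symm hn⟩

/-- Two commuting elements of a free group are powers of a common element. -/
private lemma commute_common_power {G : Type*} [Group G] [IsFreeGroup G]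
    {x y : G} (hxy : Commute x y) :
    ∃ w : G, x ∈ Subgroup.zpowers w ∧ y ∈ Subgroup.zpowers w := by
  set K : Subgroup G := Subgroup.closure {x, y}
  have hxK : x ∈ K := Subgroup.subset_closure (by simp)
  have hyK : y ∈ K := Subgroup.subset_closure (by simp)
  have hKcent : K ≤ Subgroup.centralizer {x, y} := by
    rw [Subgroup.closure_le]
    intro g hg
    rw [SetLike.mem_coe, Subgroup.mem_centralizer_iff]
    rcases hg with rfl | hg
    · rintro c (rfl | rfl) <;> [rfl; exact hxy.symm.eq]
    · rw [Set.mem_singleton_iff] at hg; subst hg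
      rintro c (rfl | rfl) <;> [exact hxy.eq; rfl]
  have hcomm : ∀ p q : K, Commute p q := by
    rintro ⟨p, hp⟩ ⟨q, hq⟩
    have hq' := hKcent hq
    rw [Subgroup.mem_centralizer_iff] at hq'
    have hle : K ≤ Subgroup.centralizer {q} := by
      refine (Subgroup.closure_le _).mpr ?_
      intro c hc
      rw [SetLike.mem_coe, Subgroup.mem_centralizer_singleton_iff]
      exact hq' c hc
    have hpq : q * p = p * q := (hle hp) q rfl
    exact Subtype.ext hpq.symm
  obtain ⟨g, hg⟩ := abelian_free_cyclic hcomm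
  refine ⟨(g : G), ?_, ?_⟩
  · obtain ⟨n, hn⟩ := hg ⟨x, hxK⟩
    exact ⟨n, by simpa using congrArg (Subtype.val) hn⟩
  · obtain ⟨n, hn⟩ := hg ⟨y, hyK⟩
    exact ⟨n, by simpa using congrArg (Subtype.val) hn⟩

/-- If `of a = w ^ k` and `z = w ^ m` in a free group, then `z` is a power of `of a`. -/
private lemma zpowers_of_gen {ι : Type*} [DecidableEq ι] {a : ι} {w z : FreeGroup ι} {k m : ℤ}
    (hk : FreeGroup.of a = w ^ k) (hm : z = w ^ m) :
    z ∈ Subgroup.zpowers (FreeGroup.of a) := by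
  let σ : FreeGroup ι →* Multiplicative ℤ :=
    FreeGroup.lift (fun i => Multiplicative.ofAdd (if i = a then (1:ℤ) else 0))
  have h1 : σ (FreeGroup.of a) = Multiplicative.ofAdd 1 := by simp [σ]
  have h2 : (σ w) ^ k = Multiplicative.ofAdd 1 := by rw [← map_zpow, ← hk, h1]
  have h3 : k * (Multiplicative.toAdd (σ w)) = 1 := by
    have := congrArg Multiplicative.toAdd h2
    simpa [toAdd_zpow, mul_comm] using this
  rcases Int.eq_one_or_neg_one_of_mul_eq_one h3 with h | h
  · rw [h, zpow_one] at hk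
    exact Subgroup.mem_zpowers_iff.mpr ⟨m, by rw [hm, hk]⟩
  · rw [h] at hk
    have hw : w = (FreeGroup.of a)⁻¹ := by
      rw [hk]; group
    exact Subgroup.mem_zpowers_iff.mpr ⟨-m, by rw [hm, hw]; group⟩

private lemma center_cyclic {H : Type*} [Group H] [IsFreeGroup H]
    (z : H) (hz : z ≠ 1) (hc : ∀ x : H, Commute z x) :
    ∃ g : H, ∀ x : H, x ∈ Subgroup.zpowers g := by
  classical
  set ι := IsFreeGroup.Generators H
  let e : H ≃* FreeGroup ι := IsFreeGroup.toFreeGroup H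
  have hsub : Subsingleton ι := by
    by_contra hns
    rw [not_subsingleton_iff_nontrivial] at hns
    obtain ⟨a, b, hab⟩ := hns
    set z' : FreeGroup ι := e z with hz'def
    have hz'1 : z' ≠ 1 := by
      intro h1
      exact hz (e.injective (by simpa [hz'def] using h1))
    have hmem : ∀ c : ι, Commute z' (FreeGroup.of c) := by
      intro c
      have := (hc (e.symm (FreeGroup.of c))).map e.toMonoidHom
      simpa [hz'def] using this
    have key : ∀ c : ι, z' ∈ Subgroup.zpowers (FreeGroup.of c) := by
      intro c
      obtain ⟨w, hwz, hwc⟩ := commute_common_power (hmem c)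
      obtain ⟨k, hk⟩ := Subgroup.mem_zpowers_iff.mp hwc
      obtain ⟨m, hm⟩ := Subgroup.mem_zpowers_iff.mp hwz
      exact zpowers_of_gen hk.symm hm.symm
    obtain ⟨s, hs⟩ := Subgroup.mem_zpowers_iff.mp (key a)
    obtain ⟨t, ht⟩ := Subgroup.mem_zpowers_iff.mp (key b)
    let σ : FreeGroup ι →* Multiplicative ℤ :=
      FreeGroup.lift (fun i => Multiplicative.ofAdd (if i = a then (1:ℤ) else 0))
    have e1 : σ z' = Multiplicative.ofAdd s := by
      rw [← hs, map_zpow]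
      simp [σ, ← ofAdd_zsmul]
    have e2 : σ z' = Multiplicative.ofAdd 0 := by
      rw [← ht, map_zpow]
      simp [σ, if_neg (Ne.symm hab), ← ofAdd_zsmul]
    have hs0 : s = 0 := by
      have := e1.symm.trans e2
      exact_mod_cast Multiplicative.ofAdd.injective this
    exact hz'1 (by rw [← hs, hs0, zpow_zero])
  obtain ⟨g, hg⟩ := @freeGroup_subsingleton_cyclic ι hsub
  refine ⟨e.symm g, fun x => ?_⟩
  obtain ⟨n, hn⟩ := hg (e x)
  exact ⟨n, by simpa using congrArg e.symm hn⟩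

end Aux

/-- In a free group `G`, the centralizer of a nontrivial element `h` is a cyclic group
(generated by a single element), and it contains the cyclic subgroup generated by `h`. -/
theorem stmt10 {G : Type*} [Group G] [IsFreeGroup G] (h : G) (hh : h ≠ 1) :
    (∃ g : G, Subgroup.centralizer {h} = Subgroup.zpowers g) ∧
    Subgroup.zpowers h ≤ Subgroup.centralizer {h} := by
  have hmem : h ∈ Subgroup.centralizer {h} := Subgroup.mem_centralizer_singleton_iff.mpr rfl
  constructor
  · set C := Subgroup.centralizer {h} with hC
    have hz : (⟨h, hmem⟩ : C) ≠ 1 := fun hcon => hh (congrArg Subtype.val hcon)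
    have hc : ∀ x : C, Commute (⟨h, hmem⟩ : C) x := by
      rintro ⟨x, hx⟩
      have hxh := Subgroup.mem_centralizer_singleton_iff.mp hx
      exact Subtype.ext (by simpa using hxh.symm)
    obtain ⟨g, hg⟩ := center_cyclic _ hz hc
    refine ⟨(g : G), le_antisymm ?_ ?_⟩
    · intro x hx
      obtain ⟨n, hn⟩ := Subgroup.mem_zpowers_iff.mp (hg ⟨x, hx⟩)
      exact Subgroup.mem_zpowers_iff.mpr ⟨n, by simpa using congrArg Subtype.val hn⟩
    · exact Subgroup.zpowers_le.mpr g.2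
  · exact Subgroup.zpowers_le.mpr hmem
end

section
/- Let D be a division ring with center F, K a subfield of D containing F, and x ∈ D an element that is left algebraic over K and satisfies xKx⁻¹ ⊆ K. Then L = K + Kx + Kx² + ⋯, the left K-subspace of D spanned by the powers of x, is a division subring of D that is finite-dimensional as a left K-vector space. -/
/-!
Since conjugation by `x` preserves `K`, so does conjugation by every power `xⁿ`; hence
`xⁿ k = k' xⁿ` with `k' ∈ K`, which makes `L = powersSpan K x` closed under right
multiplication by `K` and by `x`, hence under multiplication. Left algebraicity, read off at the top nonzero coefficient,
puts some `x^N` in the span of the lower powers, so `L` is spanned by `1, x, …, x^(N-1)`. In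
the finite dimensional left `K`-space `L`, right multiplication by `a ≠ 0` is injective and
`K`-linear, hence surjective, and a preimage of `1` is `a⁻¹`.
-/

section RightMultiplication

variable {D : Type*} [DivisionRing D]

theorem mul_mem_of_mem_span_of_forall_mem {R : Type*} [Semiring R] [Module R D]
    [IsScalarTower R D D] {M : Submodule R D} {S : Set D} {d : D}
    (h : ∀ s ∈ S, s * d ∈ M) {a : D} (ha : a ∈ Submodule.span R S) : a * d ∈ M :=
  (Submodule.map_span_le (LinearMap.mulRight R d) S M).2 h (Submodule.mem_map_of_mem ha)

theorem mul_mem_of_mem_span {K : Subfield D} {M : Submodule K D} {S : Set D}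
    (hK : ∀ a ∈ M, ∀ k ∈ K, a * k ∈ M) (hS : ∀ a ∈ M, ∀ s ∈ S, a * s ∈ M)
    {a b : D} (ha : a ∈ M) (hb : b ∈ Submodule.span K S) : a * b ∈ M := by
  induction hb using Submodule.span_induction generalizing a with
  | mem s hs => exact hS a ha s hs
  | zero => simp
  | add b c _ _ hb hc => rw [mul_add]; exact M.add_mem (hb ha) (hc ha)
  | smul k b _ hb =>
    show a * ((k : D) * b) ∈ M
    rw [← mul_assoc]
    exact hb (hK a ha k k.2)

theorem inv_mem_of_finite {K : Type*} [DivisionRing K] [Module K D] [IsScalarTower K D D]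
    (M : Submodule K D) [Module.Finite K M] (hone : 1 ∈ M)
    (hmul : ∀ a ∈ M, ∀ b ∈ M, a * b ∈ M) {a : D} (ha : a ∈ M) (ha₀ : a ≠ 0) : a⁻¹ ∈ M := by
  let f : M →ₗ[K] M := (LinearMap.mulRight K a).restrict fun b hb => hmul b hb a ha
  have hf : Function.Injective f := fun b c hbc =>
    Subtype.ext (mul_right_cancel₀ ha₀ (congrArg Subtype.val hbc))
  obtain ⟨b, hb⟩ := LinearMap.injective_iff_surjective.mp hf ⟨1, hone⟩
  rw [← eq_inv_of_mul_eq_one_left (congrArg Subtype.val hb)]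
  exact b.2

end RightMultiplication

section PowersSpan

variable {D : Type*} [DivisionRing D] {K : Subfield D} {x : D}

def powersSpan (K : Subfield D) (x : D) : Submodule K D :=
  Submodule.span K (Set.range (x ^ ·))

theorem pow_mem_powersSpan (n : ℕ) : x ^ n ∈ powersSpan K x :=
  Submodule.subset_span ⟨n, rfl⟩

theorem one_mem_powersSpan : (1 : D) ∈ powersSpan K x := by
  simpa using pow_mem_powersSpan (K := K) (x := x) 0

theorem pow_mul_mul_inv_pow_mem (hinv : ∀ k ∈ K, x * k * x⁻¹ ∈ K) (n : ℕ) {k : D}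
    (hk : k ∈ K) : x ^ n * k * (x ^ n)⁻¹ ∈ K := by
  induction n with
  | zero => simpa
  | succ n ih =>
    convert hinv _ ih using 1
    simp only [pow_succ', mul_inv_rev, mul_assoc]

theorem mul_mem_powersSpan_of_mem_subfield (hinv : ∀ k ∈ K, x * k * x⁻¹ ∈ K) {a k : D}
    (ha : a ∈ powersSpan K x) (hk : k ∈ K) : a * k ∈ powersSpan K x := by
  refine mul_mem_of_mem_span_of_forall_mem ?_ ha
  rintro _ ⟨n, rfl⟩
  have hconj : x ^ n * k = (x ^ n * k * (x ^ n)⁻¹) * x ^ n := by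
    rcases eq_or_ne (x ^ n) 0 with h | h
    · simp [h]
    · rw [inv_mul_cancel_right₀ h]
  rw [hconj]
  exact Submodule.smul_mem _ ⟨_, pow_mul_mul_inv_pow_mem hinv n hk⟩ (pow_mem_powersSpan n)

theorem mul_pow_mem_powersSpan {a : D} (ha : a ∈ powersSpan K x) (m : ℕ) :
    a * x ^ m ∈ powersSpan K x := by
  refine mul_mem_of_mem_span_of_forall_mem ?_ ha
  rintro _ ⟨n, rfl⟩
  rw [← pow_add]
  exact pow_mem_powersSpan _

theorem mul_mem_powersSpan (hinv : ∀ k ∈ K, x * k * x⁻¹ ∈ K) {a b : D}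
    (ha : a ∈ powersSpan K x) (hb : b ∈ powersSpan K x) : a * b ∈ powersSpan K x := by
  refine mul_mem_of_mem_span (fun a ha k hk => mul_mem_powersSpan_of_mem_subfield hinv ha hk)
    ?_ ha hb
  rintro a ha _ ⟨m, rfl⟩
  exact mul_pow_mem_powersSpan ha m

theorem pow_mem_span_of_sum_eq_zero {n : ℕ} (c : Fin (n + 1) → K) (hc : c (Fin.last n) ≠ 0)
    (h : ∑ i : Fin (n + 1), (c i : D) * x ^ (i : ℕ) = 0) :
    x ^ n ∈ Submodule.span K (Set.range fun i : Fin n => x ^ (i : ℕ)) := by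
  rw [Fin.sum_univ_castSucc, add_eq_zero_iff_eq_neg'] at h
  simp only [Fin.val_last, Fin.val_castSucc] at h
  have hx : x ^ n = -((c (Fin.last n))⁻¹ • ∑ i : Fin n, c i.castSucc • x ^ (i : ℕ)) := by
    have hcD : (c (Fin.last n) : D) ≠ 0 := by exact_mod_cast hc
    rw [← inv_mul_cancel_left₀ hcD (x ^ n), h]
    simp [Subfield.smul_def, mul_neg]
  rw [hx]
  exact Submodule.neg_mem _ <| Submodule.smul_mem _ _ <| Submodule.sum_mem _ fun i _ =>
    Submodule.smul_mem _ _ (Submodule.subset_span ⟨i, rfl⟩)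

theorem exists_pow_mem_span_lower_pows {n : ℕ} (c : Fin (n + 1) → K) (hc : ∃ i, c i ≠ 0)
    (h : ∑ i : Fin (n + 1), (c i : D) * x ^ (i : ℕ) = 0) :
    ∃ N, x ^ N ∈ Submodule.span K (Set.range fun i : Fin N => x ^ (i : ℕ)) := by
  induction n with
  | zero =>
    obtain ⟨i, hi⟩ := hc
    obtain rfl : i = Fin.last 0 := Subsingleton.elim (α := Fin 1) _ _
    exact ⟨0, pow_mem_span_of_sum_eq_zero c hi h⟩
  | succ n ih =>
    by_cases hlast : c (Fin.last (n + 1)) = 0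
    · refine ih (c ∘ Fin.castSucc) ?_ ?_
      · obtain ⟨i, hi⟩ := hc
        rcases Fin.eq_castSucc_or_eq_last i with ⟨j, rfl⟩ | rfl
        · exact ⟨j, hi⟩
        · exact absurd hlast hi
      · simpa [Fin.sum_univ_castSucc (n := n + 1), hlast] using h
    · exact ⟨n + 1, pow_mem_span_of_sum_eq_zero c hlast h⟩

theorem powersSpan_eq_span_lower_pows {N : ℕ}
    (hN : x ^ N ∈ Submodule.span K (Set.range fun i : Fin N => x ^ (i : ℕ))) :
    powersSpan K x = Submodule.span K (Set.range fun i : Fin N => x ^ (i : ℕ)) := by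
  set S := Submodule.span K (Set.range fun i : Fin N => x ^ (i : ℕ))
  have hmulx : ∀ a ∈ S, a * x ∈ S := fun a ha => by
    refine mul_mem_of_mem_span_of_forall_mem ?_ ha
    rintro _ ⟨i, rfl⟩
    rw [← pow_succ]
    rcases (show (i : ℕ) + 1 ≤ N from i.2).lt_or_eq with hi | hi
    · exact Submodule.subset_span ⟨⟨i + 1, hi⟩, rfl⟩
    · rwa [hi]
  have hpow : ∀ j : ℕ, x ^ j ∈ S := fun j => by
    induction j with
    | zero =>
      rcases N with _ | N
      · exact hN
      · exact Submodule.subset_span ⟨0, rfl⟩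
    | succ j ih => rw [pow_succ]; exact hmulx _ ih
  refine le_antisymm (Submodule.span_le.2 ?_) (Submodule.span_le.2 ?_)
  · rintro _ ⟨j, rfl⟩
    exact hpow j
  · rintro _ ⟨i, rfl⟩
    exact pow_mem_powersSpan i

theorem finite_powersSpan {n : ℕ} (c : Fin (n + 1) → K) (hc : ∃ i, c i ≠ 0)
    (h : ∑ i : Fin (n + 1), (c i : D) * x ^ (i : ℕ) = 0) : Module.Finite K (powersSpan K x) := by
  obtain ⟨N, hN⟩ := exists_pow_mem_span_lower_pows c hc h
  rw [powersSpan_eq_span_lower_pows hN]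
  exact Module.Finite.span_of_finite K (Set.finite_range _)

end PowersSpan

theorem stmt11_general {D : Type*} [DivisionRing D] (K : Subfield D)
    (x : D)
    (halg : ∃ (n : ℕ) (c : Fin (n + 1) → K), (∃ i, c i ≠ 0) ∧
      ∑ i : Fin (n + 1), (c i : D) * x ^ (i : ℕ) = 0)
    (hinv : ∀ k ∈ K, x * k * x⁻¹ ∈ K) :
    (1 : D) ∈ Submodule.span K (Set.range fun n : ℕ => x ^ n) ∧
    (∀ a ∈ Submodule.span K (Set.range fun n : ℕ => x ^ n),
      ∀ b ∈ Submodule.span K (Set.range fun n : ℕ => x ^ n),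
        a * b ∈ Submodule.span K (Set.range fun n : ℕ => x ^ n)) ∧
    (∀ a ∈ Submodule.span K (Set.range fun n : ℕ => x ^ n), a ≠ 0 →
      a⁻¹ ∈ Submodule.span K (Set.range fun n : ℕ => x ^ n)) ∧
    Module.Finite K (Submodule.span K (Set.range fun n : ℕ => x ^ n)) := by
  obtain ⟨n, c, hc, hsum⟩ := halg
  have hmul : ∀ a ∈ powersSpan K x, ∀ b ∈ powersSpan K x, a * b ∈ powersSpan K x :=
    fun a ha b hb => mul_mem_powersSpan hinv ha hb
  have hfin := finite_powersSpan c hc hsum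
  exact ⟨one_mem_powersSpan, hmul,
    fun a ha ha₀ => inv_mem_of_finite _ one_mem_powersSpan hmul ha ha₀, hfin⟩

/-- Let `D` be a division ring with center `F`, `K` a subfield of `D` containing `F`,
and `x ∈ D` left algebraic over `K` with `x K x⁻¹ ⊆ K`. Then the left `K`-span `L` of
the powers of `x` is a division subring of `D` which is finite dimensional as a left
`K`-vector space. -/
theorem stmt11 {D : Type*} [DivisionRing D] (K : Subfield D)
    (hcomm : ∀ x ∈ K, ∀ y ∈ K, x * y = y * x)
    (hFK : ∀ z ∈ Subring.center D, z ∈ K)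
    (x : D)
    (halg : ∃ (n : ℕ) (c : Fin (n + 1) → K), (∃ i, c i ≠ 0) ∧
      ∑ i : Fin (n + 1), (c i : D) * x ^ (i : ℕ) = 0)
    (hinv : ∀ k ∈ K, x * k * x⁻¹ ∈ K) :
    (1 : D) ∈ Submodule.span K (Set.range fun n : ℕ => x ^ n) ∧
    (∀ a ∈ Submodule.span K (Set.range fun n : ℕ => x ^ n),
      ∀ b ∈ Submodule.span K (Set.range fun n : ℕ => x ^ n),
        a * b ∈ Submodule.span K (Set.range fun n : ℕ => x ^ n)) ∧
    (∀ a ∈ Submodule.span K (Set.range fun n : ℕ => x ^ n), a ≠ 0 →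
      a⁻¹ ∈ Submodule.span K (Set.range fun n : ℕ => x ^ n)) ∧
    Module.Finite K (Submodule.span K (Set.range fun n : ℕ => x ^ n)) :=
  stmt11_general K x halg hinv
end

section
/- Let D be a division ring with center F, K a subfield containing F, and x ∈ D with xKx⁻¹ ⊆ K. If x is left algebraic over K with minimal polynomial of degree n, then the left K-span of the powers of x equals K + Kx + ⋯ + Kx^{n-1}, and every nonzero element of this span has a multiplicative inverse lying in the span. -/
/-!
Since `x k = (x k x⁻¹) x` with `x k x⁻¹ ∈ K`, left multiplication by `x` maps a left
`K`-span `span K s` into itself as soon as it maps `s` into it. The monic relation puts `x ^ n` into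
`V = K + Kx + ⋯ + Kx^(n-1)`, so `V` is stable under `x`, contains all powers of `x`, and is
the whole span `W`; the same twisting shows that `W` is closed under multiplication. For
`a ≠ 0` in the finite-dimensional `W`, right multiplication by `a` is an injective, hence
surjective, `K`-linear endomorphism of `W`, so some `v ∈ W` has `v a = 1`.
-/

open Submodule Set

section

variable {D : Type*} [DivisionRing D]

theorem mul_eq_conj_mul (x k : D) : x * k = x * k * x⁻¹ * x := by
  rcases eq_or_ne x 0 with rfl | hx
  · simp
  · rw [inv_mul_cancel_right₀ hx]

theorem inv_mem_of_mul_mem {R : Type*} [DivisionRing R] [Module R D] [IsScalarTower R D D]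
    (S : Submodule R D) [FiniteDimensional R S] (h1 : (1 : D) ∈ S) {a : D}
    (hmul : ∀ b ∈ S, b * a ∈ S) (ha : a ≠ 0) : a⁻¹ ∈ S := by
  let f : S →ₗ[R] S := (LinearMap.mulRight R a).restrict hmul
  have hf : Function.Injective f := fun u v huv =>
    Subtype.ext (mul_right_cancel₀ ha (congrArg Subtype.val huv))
  obtain ⟨v, hv⟩ := LinearMap.injective_iff_surjective.mp hf ⟨1, h1⟩
  have hva : (v : D) * a = 1 := congrArg Subtype.val hv
  exact eq_inv_of_mul_eq_one_left hva ▸ v.2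

variable {K : Subfield D} {x : D}

theorem mul_mem_span_of_conj_mem (hinv : ∀ k ∈ K, x * k * x⁻¹ ∈ K) {s : Set D}
    (hs : ∀ y ∈ s, x * y ∈ span K s) {v : D} (hv : v ∈ span K s) : x * v ∈ span K s := by
  induction hv using span_induction with
  | mem y hy => exact hs y hy
  | zero => simp
  | add a b _ _ ha hb => rw [mul_add]; exact add_mem ha hb
  | smul k a _ ha =>
    have htwist : x * (k • a) = (⟨x * k * x⁻¹, hinv k k.2⟩ : K) • (x * a) := by
      change x * (k * a) = x * k * x⁻¹ * (x * a)
      rw [← mul_assoc, ← mul_assoc, ← mul_eq_conj_mul]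
    rw [htwist]
    exact smul_mem _ _ ha

theorem span_range_pow_le (S : Submodule K D) (h1 : (1 : D) ∈ S) (hx : ∀ v ∈ S, x * v ∈ S) :
    span K (range fun m : ℕ => x ^ m) ≤ S := by
  rw [span_le]
  rintro _ ⟨m, rfl⟩
  dsimp only
  induction m with
  | zero => simpa using h1
  | succ m ih => rw [pow_succ']; exact hx _ ih

theorem mul_mem_span_range_pow (hinv : ∀ k ∈ K, x * k * x⁻¹ ∈ K) {a b : D}
    (ha : a ∈ span K (range fun m : ℕ => x ^ m)) (hb : b ∈ span K (range fun m : ℕ => x ^ m)) :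
    a * b ∈ span K (range fun m : ℕ => x ^ m) := by
  induction ha using span_induction with
  | mem y hy =>
    obtain ⟨i, rfl⟩ := hy
    dsimp only
    induction i with
    | zero => simpa using hb
    | succ i ih =>
      rw [pow_succ', mul_assoc]
      refine mul_mem_span_of_conj_mem hinv ?_ ih
      rintro _ ⟨m, rfl⟩
      exact subset_span ⟨m + 1, pow_succ' x m⟩
  | zero => simp
  | add a a' _ _ ha ha' => rw [add_mul]; exact add_mem ha ha'
  | smul k a _ ha => rw [smul_mul_assoc]; exact smul_mem _ _ ha

theorem pow_mem_span_range_fin_of_le {n : ℕ} (c : Fin (n + 1) → K) (hmonic : c (Fin.last n) = 1)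
    (hann : ∑ i : Fin (n + 1), (c i : D) * x ^ (i : ℕ) = 0) {m : ℕ} (hm : m ≤ n) :
    x ^ m ∈ span K (range fun i : Fin n => x ^ (i : ℕ)) := by
  rcases hm.lt_or_eq with hm | rfl
  · exact subset_span ⟨⟨m, hm⟩, rfl⟩
  rw [Fin.sum_univ_castSucc] at hann
  simp only [hmonic, Fin.val_last, Fin.val_castSucc, OneMemClass.coe_one, one_mul] at hann
  rw [eq_neg_of_add_eq_zero_right hann]
  exact neg_mem (sum_mem fun i _ => smul_mem _ (c i.castSucc) (subset_span ⟨i, rfl⟩))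

theorem span_range_pow_eq_span_range_fin (hinv : ∀ k ∈ K, x * k * x⁻¹ ∈ K) {n : ℕ}
    (c : Fin (n + 1) → K) (hmonic : c (Fin.last n) = 1)
    (hann : ∑ i : Fin (n + 1), (c i : D) * x ^ (i : ℕ) = 0) :
    span K (range fun m : ℕ => x ^ m) = span K (range fun i : Fin n => x ^ (i : ℕ)) := by
  have hpow {m : ℕ} (hm : m ≤ n) := pow_mem_span_range_fin_of_le c hmonic hann hm
  refine le_antisymm (span_range_pow_le _ (pow_zero x ▸ hpow n.zero_le) fun v hv => ?_)
    (span_mono (range_subset_iff.mpr fun i => ⟨i, rfl⟩))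
  refine mul_mem_span_of_conj_mem hinv ?_ hv
  rintro _ ⟨i, rfl⟩
  exact pow_succ' x i ▸ hpow i.2

end

theorem stmt12_general {D : Type*} [DivisionRing D] (K : Subfield D)
    (x : D) (hinv : ∀ k ∈ K, x * k * x⁻¹ ∈ K)
    (n : ℕ)
    (c : Fin (n + 1) → K) (hmonic : c (Fin.last n) = 1)
    (hann : ∑ i : Fin (n + 1), (c i : D) * x ^ (i : ℕ) = 0) :
    Submodule.span K (Set.range fun m : ℕ => x ^ m)
      = Submodule.span K (Set.range fun i : Fin n => x ^ (i : ℕ)) ∧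
    ∀ a ∈ Submodule.span K (Set.range fun m : ℕ => x ^ m), a ≠ 0 →
      a⁻¹ ∈ Submodule.span K (Set.range fun m : ℕ => x ^ m) := by
  have hspan := span_range_pow_eq_span_range_fin hinv c hmonic hann
  have : FiniteDimensional K (span K (range fun m : ℕ => x ^ m)) :=
    hspan ▸ FiniteDimensional.span_of_finite K (finite_range _)
  refine ⟨hspan, fun a ha ha0 => inv_mem_of_mul_mem _ ?_ (fun b hb => ?_) ha0⟩
  · exact subset_span ⟨0, pow_zero x⟩
  · exact mul_mem_span_range_pow hinv hb ha

/-- Let `D` be a division ring, `K` a subfield with `x K x⁻¹ ⊆ K`, and `x` left algebraic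
over `K` with minimal polynomial of degree `n`. Then the left `K`-span of all powers of
`x` equals `K + Kx + ⋯ + Kx^(n-1)`, and every nonzero element of this span has its
inverse in the span. -/
theorem stmt12 {D : Type*} [DivisionRing D] (K : Subfield D)
    (hcomm : ∀ x ∈ K, ∀ y ∈ K, x * y = y * x)
    (x : D) (hinv : ∀ k ∈ K, x * k * x⁻¹ ∈ K)
    (n : ℕ) (hn : 0 < n)
    (c : Fin (n + 1) → K) (hmonic : c (Fin.last n) = 1)
    (hann : ∑ i : Fin (n + 1), (c i : D) * x ^ (i : ℕ) = 0)
    (hmin : ∀ d : Fin n → K, ∑ i : Fin n, (d i : D) * x ^ (i : ℕ) = 0 → ∀ i, d i = 0) :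
    Submodule.span K (Set.range fun m : ℕ => x ^ m)
      = Submodule.span K (Set.range fun i : Fin n => x ^ (i : ℕ)) ∧
    ∀ a ∈ Submodule.span K (Set.range fun m : ℕ => x ^ m), a ≠ 0 →
      a⁻¹ ∈ Submodule.span K (Set.range fun m : ℕ => x ^ m) :=
  stmt12_general K x hinv n c hmonic hann
end

section
/- Let D be a division ring, algebraic over its center F, whose multiplicative group D* contains a non-abelian solvable subgroup. Then D contains a noncommutative division subring that is finite-dimensional over its own center. -/
set_option maxHeartbeats 1000000
set_option synthInstance.maxHeartbeats 400000


lemma grp_aux {G : Type*} [Group G] (hsolv : IsSolvable G)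
    (hnab : ∃ a b : G, a * b ≠ b * a) :
    ∃ x y : G, x * y ≠ y * x ∧
      ∀ i j : ℤ, (x ^ i * y * x ^ (-i)) * (x ^ j * y * x ^ (-j))
        = (x ^ j * y * x ^ (-j)) * (x ^ i * y * x ^ (-i)) := by
  classical
  obtain ⟨N, hN⟩ := hsolv
  have hex : ∃ n, ∀ a ∈ derivedSeries G n, ∀ b ∈ derivedSeries G n, a * b = b * a := by
    refine ⟨N, ?_⟩
    rw [hN]
    intro a ha b hb
    rw [Subgroup.mem_bot.1 ha, Subgroup.mem_bot.1 hb]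
  have hn0 : Nat.find hex ≠ 0 := by
    intro h
    obtain ⟨a, b, hne⟩ := hnab
    have := Nat.find_spec hex
    rw [h] at this
    exact hne (this a (Subgroup.mem_top a) b (Subgroup.mem_top b))
  obtain ⟨m, hm⟩ : ∃ m, Nat.find hex = m + 1 :=
    ⟨Nat.find hex - 1, (Nat.succ_pred_eq_of_pos (Nat.pos_of_ne_zero hn0)).symm⟩
  have hab : ∀ a ∈ derivedSeries G (m+1), ∀ b ∈ derivedSeries G (m+1), a * b = b * a := by
    rw [← hm]; exact Nat.find_spec hex
  have hM : ¬ ∀ a ∈ derivedSeries G m, ∀ b ∈ derivedSeries G m, a * b = b * a :=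
    Nat.find_min hex (by omega)
  push_neg at hM
  obtain ⟨x, hx, y, hy, hxy⟩ := hM
  by_cases hc : ∀ g ∈ derivedSeries G m, ∀ a ∈ derivedSeries G (m+1), g * a = a * g
  · refine ⟨x, y, hxy, ?_⟩
    set c := x * y * x⁻¹ * y⁻¹ with hc_def
    have hcA : c ∈ derivedSeries G (m+1) := by
      rw [derivedSeries_succ]
      exact Subgroup.commutator_mem_commutator hx hy
    have hcx : x * c = c * x := hc x hx c hcA
    have hcy : y * c = c * y := hc y hy c hcA
    have hxyx : x * y * x⁻¹ = c * y := by
      rw [hc_def]; group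
    have hxyx' : x⁻¹ * y * x = c⁻¹ * y := by
      have : x⁻¹ * (c * y) * x = y := by rw [← hxyx]; group
      have h2 : x⁻¹ * c * x = c := by
        rw [mul_assoc, ← hcx]; group
      calc x⁻¹ * y * x = c⁻¹ * (x⁻¹ * c * x) * (x⁻¹ * y * x) := by rw [h2]; group
        _ = c⁻¹ * (x⁻¹ * (c * y) * x) := by group
        _ = c⁻¹ * y := by rw [this]
    have hCcx : Commute c x := (hcx).symm
    have hCcy : Commute c y := (hcy).symm
    have key : ∀ i : ℤ, x ^ i * y * x ^ (-i) = c ^ i * y := by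
      intro i
      induction i using Int.induction_on with
      | zero => simp
      | succ k ih =>
        have h1 : x ^ ((k : ℤ) + 1) * y * x ^ (-((k : ℤ) + 1))
            = x * (x ^ (k : ℤ) * y * x ^ (-(k : ℤ))) * x⁻¹ := by
          rw [zpow_add_one x k, neg_add, zpow_add x (-(k:ℤ)) (-1), zpow_neg_one]
          group
        have hcomm : x * (c ^ (k:ℤ) * y) * x⁻¹ = c ^ (k:ℤ) * (x * y * x⁻¹) := by
          have h := (hCcx.zpow_left (k:ℤ)).eq
          calc x * (c ^ (k:ℤ) * y) * x⁻¹ = (c ^ (k:ℤ) * x) * y * x⁻¹ := by rw [h]; group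
            _ = c ^ (k:ℤ) * (x * y * x⁻¹) := by group
        rw [h1, ih, hcomm, hxyx, zpow_add_one]
        group
      | pred k ih =>
        have h1 : x ^ (-(k : ℤ) - 1) * y * x ^ (-(-(k : ℤ) - 1))
            = x⁻¹ * (x ^ (-(k : ℤ)) * y * x ^ ((k : ℤ))) * x := by
          rw [zpow_sub_one x (-(k:ℤ))]
          group
        have h2 : x ^ (-(-(k:ℤ))) = x ^ (k:ℤ) := by norm_num
        have hcomm : x⁻¹ * (c ^ (-(k:ℤ)) * y) * x = c ^ (-(k:ℤ)) * (x⁻¹ * y * x) := by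
          have h := ((hCcx.zpow_left (-(k:ℤ))).inv_right).eq
          calc x⁻¹ * (c ^ (-(k:ℤ)) * y) * x = (c ^ (-(k:ℤ)) * x⁻¹) * y * x := by rw [h]; group
            _ = c ^ (-(k:ℤ)) * (x⁻¹ * y * x) := by group
        rw [h2] at ih
        rw [h1, ih, hcomm, hxyx']
        rw [show (-(k:ℤ) - 1) = (-(k:ℤ)) + (-1) by ring, zpow_add, zpow_neg_one]
        group
    intro i j
    rw [key, key]
    have hyc : ∀ k : ℤ, y * c ^ k = c ^ k * y := fun k => ((hCcy.zpow_left k).symm).eq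
    calc c ^ i * y * (c ^ j * y) = c ^ i * (y * c ^ j) * y := by group
      _ = c ^ i * (c ^ j * y) * y := by rw [hyc]
      _ = c ^ j * (c ^ i * y) * y := by group
      _ = c ^ j * (y * c ^ i) * y := by rw [hyc]
      _ = c ^ j * y * (c ^ i * y) := by group
  · push_neg at hc
    obtain ⟨g, hg, a, ha, hga⟩ := hc
    refine ⟨g, a, hga, ?_⟩
    have hmem : ∀ i : ℤ, g ^ i * a * g ^ (-i) ∈ derivedSeries G (m+1) := by
      intro i
      have := (derivedSeries_normal G (m+1)).conj_mem a ha (g ^ i)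
      rwa [← zpow_neg] at this
    intro i j
    exact hab _ (hmem i) _ (hmem j)

section Aux

variable {D : Type*} [DivisionRing D]

/-- Conjugation by a unit as an algebra homomorphism over the center. -/
def conjAH (u : Dˣ) : D →ₐ[Subring.center D] D where
  toFun d := ↑u * d * ↑u⁻¹
  map_one' := by simp
  map_mul' a b := by
    have : (↑u⁻¹ : D) * ↑u = 1 := by
      rw [Units.val_inv_eq_inv_val, inv_mul_cancel₀ u.ne_zero]
    calc ↑u * (a * b) * ↑u⁻¹ = ↑u * a * ((↑u⁻¹ * ↑u) * (b * ↑u⁻¹)) := by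
          rw [this]; noncomm_ring
      _ = ↑u * a * ↑u⁻¹ * (↑u * b * ↑u⁻¹) := by noncomm_ring
  map_zero' := by simp
  map_add' a b := by noncomm_ring
  commutes' c := by
    have hc : (c : D) * ↑u = ↑u * (c : D) := (Subring.mem_center_iff.1 c.2 ↑u).symm
    show ↑u * (algebraMap (Subring.center D) D c) * ↑u⁻¹ = _
    have : (algebraMap (Subring.center D) D c) = (c : D) := rfl
    rw [this, ← hc, mul_assoc, Units.mul_inv, mul_one]

lemma conjAH_apply (u : Dˣ) (d : D) : conjAH u d = ↑u * d * ↑u⁻¹ := rfl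

lemma fg_adjoin_comm (s : Set D) (hfin : s.Finite)
    (hcomm : ∀ a ∈ s, ∀ b ∈ s, a * b = b * a)
    (halg : ∀ a ∈ s, IsAlgebraic (Subring.center D) a) :
    (Algebra.adjoin (Subring.center D) s).toSubmodule.FG := by
  set F := Subring.center D
  set R := Algebra.adjoin F s with hR
  letI : CommRing ↥R := Algebra.adjoinCommRingOfComm F hcomm
  have hval : Function.Injective (R.val : ↥R →ₐ[F] D) := Subtype.coe_injective
  have hint : ∀ z ∈ ((↑) : ↥R → D) ⁻¹' s, IsIntegral F z := by
    intro z hz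
    have : IsIntegral F (R.val z) := ((halg _ hz).isIntegral)
    exact (isIntegral_algHom_iff R.val hval).1 this
  have hfin' : (((↑) : ↥R → D) ⁻¹' s).Finite :=
    hfin.preimage (Set.injOn_of_injective Subtype.coe_injective)
  have hfg := fg_adjoin_of_finite hfin' hint
  rw [Algebra.adjoin_adjoin_coe_preimage] at hfg
  have : Module.Finite F ↥R := by
    rw [Module.finite_def, ← Algebra.top_toSubmodule]
    exact hfg
  exact (Module.Finite.iff_fg (N := Subalgebra.toSubmodule R)).1 this

end Aux

theorem stmt13' {D : Type*} [DivisionRing D]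
    (halg : ∀ a : D, IsAlgebraic (Subring.center D) a)
    (x₁ y₁ : Dˣ)
    (hne : (x₁ : D) * (y₁ : D) ≠ (y₁ : D) * (x₁ : D))
    (hcomm : ∀ i j : ℤ, ((x₁:D) ^ i * y₁ * (x₁:D) ^ (-i)) * ((x₁:D) ^ j * y₁ * (x₁:D) ^ (-j))
      = ((x₁:D) ^ j * y₁ * (x₁:D) ^ (-j)) * ((x₁:D) ^ i * y₁ * (x₁:D) ^ (-i))) :
    ∃ E : Subfield D, (∃ a b : D, a ∈ E ∧ b ∈ E ∧ a * b ≠ b * a) ∧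
      FiniteDimensional (Subring.center E) E := by
  classical
  set F := Subring.center D with hF
  set x' : D := ↑x₁ with hx'
  set y' : D := ↑y₁ with hy'
  have hx0 : x' ≠ 0 := x₁.ne_zero
  set S : Set D := Set.range (fun i : ℤ => x' ^ i * y' * x' ^ (-i)) with hS
  have hScomm : ∀ a ∈ S, ∀ b ∈ S, a * b = b * a := by
    rintro a ⟨i, rfl⟩ b ⟨j, rfl⟩
    exact hcomm i j
  set R := Algebra.adjoin F S with hRdef
  set Tx := Algebra.adjoin F ({x'} : Set D) with hTdef
  have hval_conj : ∀ i : ℤ, conjAH (x₁ ^ i) y' = x' ^ i * y' * x' ^ (-i) := by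
    intro i
    rw [conjAH_apply, ← zpow_neg, Units.val_zpow_eq_zpow_val, Units.val_zpow_eq_zpow_val]
  have hy'S : y' ∈ S := ⟨0, by simp⟩
  have hx'Tx : x' ∈ Tx := Algebra.subset_adjoin rfl
  -- each element of S is a root of the minimal polynomial of y'
  have hroot : ∀ u ∈ S, Polynomial.aeval u (minpoly F y') = 0 := by
    rintro u ⟨i, rfl⟩
    show Polynomial.aeval (x' ^ i * y' * x' ^ (-i)) (minpoly F y') = 0
    rw [← hval_conj i, Polynomial.aeval_algHom_apply, minpoly.aeval, map_zero]
  -- S is finite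
  have hSfin : S.Finite := by
    letI : CommRing ↥R := Algebra.adjoinCommRingOfComm F hScomm
    letI : NoZeroDivisors ↥R := ⟨by
      rintro ⟨a, ha⟩ ⟨b, hb⟩ h
      have : a * b = 0 := congrArg Subtype.val h
      rcases mul_eq_zero.1 this with h' | h'
      · exact Or.inl (Subtype.ext h')
      · exact Or.inr (Subtype.ext h')⟩
    letI : Nontrivial ↥R := ⟨⟨1, 0, fun h => one_ne_zero (congrArg Subtype.val h)⟩⟩
    letI : IsDomain ↥R := NoZeroDivisors.to_isDomain _
    have hyint : IsIntegral F y' := (halg y').isIntegral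
    have hp0 : minpoly F y' ≠ 0 := minpoly.ne_zero hyint
    have hq0 : (minpoly F y').map (algebraMap F ↥R) ≠ 0 :=
      (Polynomial.map_ne_zero_iff (algebraMap F ↥R).injective).2 hp0
    have hroots : {z : ↥R | ((minpoly F y').map (algebraMap F ↥R)).IsRoot z}.Finite :=
      Polynomial.finite_setOf_isRoot hq0
    have hsub : S ⊆ Subtype.val '' {z : ↥R | ((minpoly F y').map (algebraMap F ↥R)).IsRoot z} := by
      intro u hu
      refine ⟨⟨u, Algebra.subset_adjoin hu⟩, ?_, rfl⟩
      show Polynomial.eval _ _ = 0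
      rw [Polynomial.eval_map, ← Polynomial.aeval_def]
      apply Subtype.coe_injective
      show (R.val ((Polynomial.aeval (⟨u, Algebra.subset_adjoin hu⟩ : ↥R)) (minpoly F y')) : D)
        = R.val 0
      rw [← Polynomial.aeval_algHom_apply, map_zero]
      exact hroot u hu
    exact (hroots.image Subtype.val).subset hsub
  have hRfg : R.toSubmodule.FG := fg_adjoin_comm S hSfin hScomm (fun a _ => halg a)
  have hTfg : Tx.toSubmodule.FG := fg_adjoin_comm {x'} (Set.finite_singleton x')
    (by rintro a ha b hb
        rw [Set.mem_singleton_iff] at ha hb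
        rw [ha, hb])
    (fun a _ => halg a)
  -- conjugation by x' preserves S and R
  have hconjS : ∀ u ∈ S, x' * u * x'⁻¹ ∈ S := by
    rintro u ⟨i, rfl⟩
    refine ⟨i + 1, ?_⟩
    show x' ^ (i+1) * y' * x' ^ (-(i+1)) = x' * (x' ^ i * y' * x' ^ (-i)) * x'⁻¹
    have e1 : x' ^ (i + 1) = x' * x' ^ i := by rw [add_comm, zpow_add₀ hx0, zpow_one]
    have e2 : x' ^ (-(i + 1)) = x' ^ (-i) * x'⁻¹ := by
      rw [neg_add, zpow_add₀ hx0, zpow_neg_one]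
    rw [e1, e2]
    simp [mul_assoc]
  have hconjR : ∀ r ∈ R, x' * r * x'⁻¹ ∈ R := by
    intro r hr
    have h1 : conjAH x₁ r ∈ R.map (conjAH x₁) := Subalgebra.mem_map.2 ⟨r, hr, rfl⟩
    rw [AlgHom.map_adjoin] at h1
    have h3 : (conjAH x₁) '' S ⊆ S := by
      rintro _ ⟨u, hu, rfl⟩
      rw [conjAH_apply, Units.val_inv_eq_inv_val]
      exact hconjS u hu
    have h4 : conjAH x₁ r ∈ R := Algebra.adjoin_mono h3 h1
    rwa [conjAH_apply, Units.val_inv_eq_inv_val] at h4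
  -- the candidate: W = R * Tx
  set W : Submodule F D := R.toSubmodule * Tx.toSubmodule with hWdef
  have hWfg : W.FG := hRfg.mul hTfg
  have hmem_mul : ∀ r ∈ R, ∀ t ∈ Tx, r * t ∈ W := fun r hr t ht =>
    Submodule.mul_mem_mul hr ht
  have h1W : (1 : D) ∈ W := by
    have := hmem_mul 1 R.one_mem 1 Tx.one_mem
    rwa [mul_one] at this
  have hRmulW : ∀ r ∈ R, ∀ w ∈ W, r * w ∈ W := by
    intro r hr w hw
    refine Submodule.mul_induction_on hw (fun r' hr' t ht => ?_) (fun a b ha hb => ?_)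
    · rw [← mul_assoc]
      exact hmem_mul _ (R.mul_mem hr hr') _ ht
    · rw [mul_add]
      exact W.add_mem ha hb
  have hxmulW : ∀ w ∈ W, x' * w ∈ W := by
    intro w hw
    refine Submodule.mul_induction_on hw (fun r hr t ht => ?_) (fun a b ha hb => ?_)
    · have : x' * (r * t) = (x' * r * x'⁻¹) * (x' * t) := by
        calc x' * (r * t) = x' * r * t := by rw [mul_assoc]
          _ = x' * r * ((x'⁻¹ * x') * t) := by rw [inv_mul_cancel₀ hx0, one_mul]
          _ = x' * r * x'⁻¹ * (x' * t) := by simp only [mul_assoc]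
      rw [this]
      exact hmem_mul _ (hconjR r hr) _ (Tx.mul_mem hx'Tx ht)
    · rw [mul_add]
      exact W.add_mem ha hb
  have hTmulW : ∀ t ∈ Tx, ∀ w ∈ W, t * w ∈ W := by
    intro t ht
    induction ht using Algebra.adjoin_induction with
    | mem z hz =>
      rw [Set.mem_singleton_iff] at hz
      subst hz
      exact fun w hw => hxmulW w hw
    | algebraMap c =>
      intro w hw
      have : algebraMap F D c * w = c • w := (Algebra.smul_def c w).symm
      rw [this]
      exact W.smul_mem c hw
    | add t₁ t₂ h₁ h₂ ih₁ ih₂ =>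
      intro w hw
      rw [add_mul]
      exact W.add_mem (ih₁ w hw) (ih₂ w hw)
    | mul t₁ t₂ h₁ h₂ ih₁ ih₂ =>
      intro w hw
      rw [mul_assoc]
      exact ih₁ _ (ih₂ w hw)
  have hWmul : ∀ w₁ w₂ : D, w₁ ∈ W → w₂ ∈ W → w₁ * w₂ ∈ W := by
    intro w₁ w₂ hw₁ hw₂
    refine Submodule.mul_induction_on hw₁ (fun r hr t ht => ?_) (fun a b ha hb => ?_)
    · rw [mul_assoc]
      exact hRmulW r hr _ (hTmulW t ht w₂ hw₂)
    · rw [add_mul]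
      exact W.add_mem ha hb
  -- W as a subalgebra
  set E₀ : Subalgebra F D := W.toSubalgebra h1W hWmul with hE₀
  haveI hE₀fin : FiniteDimensional F ↥E₀ :=
    (Module.Finite.iff_fg (N := Subalgebra.toSubmodule E₀)).2 hWfg
  have hmemW_x : x' ∈ W := by
    have := hmem_mul 1 R.one_mem x' hx'Tx
    rwa [one_mul] at this
  have hmemW_y : y' ∈ W := by
    have := hmem_mul y' (Algebra.subset_adjoin hy'S) 1 Tx.one_mem
    rwa [mul_one] at this
  -- inverses
  have hinv : ∀ u : D, u ∈ W → u ≠ 0 → u⁻¹ ∈ W := by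
    intro u hu hu0
    let f : ↥E₀ →ₗ[F] ↥E₀ :=
      { toFun := fun z => ⟨u * ↑z, hWmul u _ hu z.2⟩
        map_add' := by
          intro z₁ z₂
          apply Subtype.ext
          show u * (↑z₁ + ↑z₂) = u * ↑z₁ + u * ↑z₂
          rw [mul_add]
        map_smul' := by
          intro c z
          apply Subtype.ext
          show u * (c • (z : D)) = c • (u * (z : D))
          rw [Algebra.smul_def, Algebra.smul_def, ← mul_assoc, ← mul_assoc]
          congr 1
          exact (Subring.mem_center_iff.1 c.2 u).symm ▸ rfl }
    have hinj : Function.Injective f := by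
      intro z₁ z₂ h
      have : u * ↑z₁ = u * ↑z₂ := congrArg Subtype.val h
      exact Subtype.ext (mul_left_cancel₀ hu0 this)
    obtain ⟨v, hv⟩ := LinearMap.surjective_of_injective hinj ⟨1, h1W⟩
    have hv1 : u * ↑v = 1 := congrArg Subtype.val hv
    have : u⁻¹ = ↑v := inv_eq_of_mul_eq_one_right hv1
    rw [this]
    exact v.2
  set E : Subfield D :=
    { E₀.toSubring with
      inv_mem' := by
        intro u hu
        by_cases hu0 : u = 0
        · rw [hu0, inv_zero]
          exact E₀.toSubring.zero_mem
        · exact hinv u hu hu0 } with hE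
  have hmemE : ∀ d : D, d ∈ E ↔ d ∈ W := fun d => Iff.rfl
  refine ⟨E, ⟨x', y', (hmemE x').2 hmemW_x, (hmemE y').2 hmemW_y, hne⟩, ?_⟩
  -- finite dimensionality over the center of E
  let φ : F →+* ↥E :=
    { toFun := fun c => ⟨(c : D), (hmemE _).2 (by
        have := hmem_mul _ (Subalgebra.algebraMap_mem R c) 1 Tx.one_mem
        rwa [mul_one] at this)⟩
      map_one' := rfl
      map_mul' := fun _ _ => rfl
      map_zero' := rfl
      map_add' := fun _ _ => rfl }
  have hφcentral : ∀ (c : F) (k : ↥E), φ c * k = k * φ c := by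
    intro c k
    apply Subtype.ext
    show (c : D) * (k : D) = (k : D) * (c : D)
    exact (Subring.mem_center_iff.1 c.2 (k : D)).symm
  letI : Algebra F ↥E := RingHom.toAlgebra' φ hφcentral
  have : Module.Finite F ↥E := by
    let e : ↥E₀ ≃ₗ[F] ↥E :=
      { toFun := fun z => ⟨↑z, z.2⟩
        invFun := fun z => ⟨↑z, z.2⟩
        left_inv := fun z => rfl
        right_inv := fun z => rfl
        map_add' := fun _ _ => rfl
        map_smul' := by
          intro c z
          apply Subtype.ext
          show c • (z : D) = ((φ c * ⟨↑z, z.2⟩ : ↥E) : D)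
          rw [Algebra.smul_def]
          rfl }
    exact Module.Finite.equiv e
  let ψ : F →+* Subring.center ↥E :=
    { toFun := fun c => ⟨φ c, Subring.mem_center_iff.2 (fun g => by
        apply Subtype.ext
        show (g : D) * (c : D) = (c : D) * (g : D)
        exact Subring.mem_center_iff.1 c.2 (g : D))⟩
      map_one' := rfl
      map_mul' := fun _ _ => rfl
      map_zero' := rfl
      map_add' := fun _ _ => rfl }
  letI : Algebra F (Subring.center ↥E) := ψ.toAlgebra
  haveI : IsScalarTower F (Subring.center ↥E) ↥E := by
    constructor
    intro c c' k
    apply Subtype.ext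
    show (((c • c' : Subring.center ↥E) : ↥E) * k : ↥E).val = ((φ c) * ((c' : ↥E) * k)).val
    have h1 : ((c • c' : Subring.center ↥E) : ↥E) = φ c * ↑c' := rfl
    rw [h1]
    show ((φ c * ↑c') * k).val = _
    rw [mul_assoc]
  exact Module.Finite.of_restrictScalars_finite F (Subring.center ↥E) ↥E


/-- Let `D` be a division ring algebraic over its center, whose multiplicative group
contains a non-abelian solvable subgroup. Then `D` contains a noncommutative division
subring which is finite dimensional over its own center. -/
theorem stmt13 {D : Type*} [DivisionRing D]
    (halg : ∀ a : D, IsAlgebraic (Subring.center D) a)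
    (H : Subgroup Dˣ) (hsolv : IsSolvable H)
    (hnab : ∃ a b : Dˣ, a ∈ H ∧ b ∈ H ∧ a * b ≠ b * a) :
    ∃ E : Subfield D, (∃ a b : D, a ∈ E ∧ b ∈ E ∧ a * b ≠ b * a) ∧
      FiniteDimensional (Subring.center E) E := by
  obtain ⟨a, b, haH, hbH, hab⟩ := hnab
  have hnab' : ∃ u v : ↥H, u * v ≠ v * u :=
    ⟨⟨a, haH⟩, ⟨b, hbH⟩, fun h => hab (congrArg Subtype.val h)⟩
  obtain ⟨x, y, hxy, hconj⟩ := grp_aux hsolv hnab'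
  have hne : ((x : Dˣ) : D) * ((y : Dˣ) : D) ≠ ((y : Dˣ) : D) * ((x : Dˣ) : D) := by
    intro h
    exact hxy (Subtype.ext (Units.ext h))
  have hcomm : ∀ i j : ℤ,
      (((x : Dˣ) : D) ^ i * ((y : Dˣ) : D) * ((x : Dˣ) : D) ^ (-i))
        * (((x : Dˣ) : D) ^ j * ((y : Dˣ) : D) * ((x : Dˣ) : D) ^ (-j))
      = (((x : Dˣ) : D) ^ j * ((y : Dˣ) : D) * ((x : Dˣ) : D) ^ (-j))
        * (((x : Dˣ) : D) ^ i * ((y : Dˣ) : D) * ((x : Dˣ) : D) ^ (-i)) := by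
    intro i j
    have h := congrArg (fun u : ↥H => ((u : Dˣ) : D)) (hconj i j)
    simpa only [Subgroup.coe_mul, SubgroupClass.coe_zpow, Units.val_mul,
      Units.val_zpow_eq_zpow_val] using h
  exact stmt13' halg (x : Dˣ) (y : Dˣ) hne hcomm
end

section
/- Let D be a division ring with center F, and suppose a ∈ D is algebraic and inseparable over F. Then there exists b ∈ D such that ab − ba = 1. -/
/-!
The minimal polynomial `m` of `a` over the center `F` is irreducible and inseparable, so `m' = 0`
and `m = (X - a)² r` over the commutative ring `K = F[a] ⊆ D`. Let `K[X]` act on `D` by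
`P · x = ∑ aⁱ x pᵢ`: then `X - a` acts as `δ = [a, -]` and `m` acts as `0`. The powers `aⁱ`,
`i < deg m`, are `F`-independent, so by the Artin–Whaples argument no nonzero polynomial of degree
`< deg m` acts as `0`. Hence some `y = r · x` has `δ y ≠ 0 = δ² y`, and `b = y (δ y)⁻¹` works.
-/

open Polynomial

namespace Subalgebra

variable {R A : Type*} [CommRing R] [Ring A] [Algebra R A] (S : Subalgebra R A)
  [IsMulCommutative S]

def mulRightHom : S →+* Module.End R A where
  toFun s := LinearMap.mulRight R (s : A)
  map_one' := by ext; simp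
  map_mul' s t := by
    ext x
    simp only [LinearMap.mulRight_apply, Module.End.mul_apply, MulMemClass.coe_mul, mul_comm' s t,
      mul_assoc]
  map_zero' := by ext; simp
  map_add' s t := by ext; simp [mul_add]

/-- `P ↦ (x ↦ ∑ aⁱ x pᵢ)`: the variable acts by left multiplication by `a`, the coefficients
by right multiplication. -/
def mulLeftRightEval (a : A) : S[X] →+* Module.End R A :=
  eval₂RingHom' S.mulRightHom (Algebra.lmul R A a) fun s => LinearMap.ext fun x => mul_assoc a x s

variable {S}

theorem mulLeftRightEval_eq_eval₂ (a : A) (P : S[X]) :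
    S.mulLeftRightEval a P = P.eval₂ S.mulRightHom (Algebra.lmul R A a) :=
  rfl

theorem mulLeftRightEval_apply {a : A} {P : S[X]} {n : ℕ} (hn : P.natDegree < n)
    (x : A) : S.mulLeftRightEval a P x = ∑ i ∈ Finset.range n, a ^ i * x * (P.coeff i : A) := by
  rw [mulLeftRightEval_eq_eval₂, eval₂_eq_sum_range' _ hn, LinearMap.sum_apply]
  refine Finset.sum_congr rfl fun i _ => ?_
  rw [Module.End.mul_apply, ← map_pow]
  rfl

theorem mulLeftRightEval_X_sub_C {a : A} (ha : a ∈ S) (x : A) :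
    S.mulLeftRightEval a (X - C ⟨a, ha⟩) x = a * x - x * a := by
  simp [mulLeftRightEval_eq_eval₂, mulRightHom]

theorem mulLeftRightEval_map_algebraMap (a : A) (p : R[X]) :
    S.mulLeftRightEval a (p.map (algebraMap R S)) = Algebra.lmul R A (aeval a p) := by
  have : S.mulRightHom.comp (algebraMap R S) =
      (Algebra.lmul R A).toRingHom.comp (algebraMap R A) := by
    ext r x
    simp [mulRightHom, Algebra.commutes, Algebra.smul_def]
  rw [mulLeftRightEval_eq_eval₂, eval₂_map, this, aeval_def]
  exact (hom_eval₂ p (algebraMap R A) (Algebra.lmul R A).toRingHom a).symm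

end Subalgebra

section DivisionRing

open Finset

variable {D : Type*} [DivisionRing D]

theorem exists_mul_sub_mul_eq_one_of_commute {a y : D} (hy : a * y - y * a ≠ 0)
    (hc : Commute a (a * y - y * a)) : ∃ b : D, a * b - b * a = 1 := by
  refine ⟨y * (a * y - y * a)⁻¹, ?_⟩
  calc a * (y * (a * y - y * a)⁻¹) - y * (a * y - y * a)⁻¹ * a
      = a * y * (a * y - y * a)⁻¹ - y * (a * (a * y - y * a)⁻¹) := by
        rw [hc.inv_right₀.eq, mul_assoc, mul_assoc]
    _ = 1 := by rw [← mul_assoc, ← sub_mul, mul_inv_cancel₀ hy]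

theorem eq_zero_of_forall_sum_mul_mul_eq_zero {ι : Type*} {b : ι → D}
    (hb : LinearIndependent (Subring.center D) b) (s : Finset ι) {c : ι → D}
    (h : ∀ x, ∑ i ∈ s, b i * x * c i = 0) : ∀ i ∈ s, c i = 0 := by
  classical
  induction s using Finset.strongInduction generalizing c with
  | _ s ih =>
  intro i hi
  by_contra hci
  -- Normalise to `c' i = 1`; the commutators `[c' j, y]` then satisfy a relation over `s.erase i`,
  -- so by induction every `c' j` is central, and the relation becomes an `F`-linear dependence.
  set c' := fun j => c j * (c i)⁻¹ with hc'
  have hc'i : c' i = 1 := mul_inv_cancel₀ hci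
  have h' : ∀ x, ∑ j ∈ s, b j * x * c' j = 0 := fun x => by
    simp only [hc', ← mul_assoc, ← Finset.sum_mul, h x, zero_mul]
  have hcen : ∀ j ∈ s, c' j ∈ Subring.center D := by
    intro j hj
    rcases eq_or_ne j i with rfl | hji
    · rw [hc'i]; exact one_mem _
    refine Subring.mem_center_iff.2 fun y => (sub_eq_zero.1 ?_).symm
    refine ih (s.erase i) (erase_ssubset hi) (c := fun j => c' j * y - y * c' j) (fun x => ?_) j
      (mem_erase.2 ⟨hji, hj⟩)
    rw [sum_erase _ (by simp [hc'i])]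
    calc ∑ j ∈ s, b j * x * (c' j * y - y * c' j)
        = (∑ j ∈ s, b j * x * c' j) * y - ∑ j ∈ s, b j * (x * y) * c' j := by
          rw [sum_mul, ← sum_sub_distrib]
          exact sum_congr rfl fun j _ => by noncomm_ring
      _ = 0 := by rw [h', h', zero_mul, sub_zero]
  let g : ι → Subring.center D := fun j => if hj : j ∈ s then ⟨c' j, hcen j hj⟩ else 0
  have hg : ∑ j ∈ s, g j • b j = 0 := by
    rw [← h' 1]
    refine sum_congr rfl fun j hj => ?_
    rw [mul_one, Subring.mem_center_iff.1 (hcen j hj) (b j)]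
    simp [g, hj, Subring.smul_def]
  have := linearIndependent_iff'.1 hb s g hg i hi
  simp [g, hi, Subtype.ext_iff, hc'i] at this

theorem eq_zero_of_forall_sum_pow_mul_mul_eq_zero (a : D) {c : ℕ → D}
    (h : ∀ x, ∑ i ∈ range (minpoly (Subring.center D) a).natDegree, a ^ i * x * c i = 0) :
    ∀ i < (minpoly (Subring.center D) a).natDegree, c i = 0 := fun i hi =>
  eq_zero_of_forall_sum_mul_mul_eq_zero (linearIndependent_pow a) univ (c := fun i => c i)
    (fun x => (Fin.sum_univ_eq_sum_range (fun i => a ^ i * x * c i) _).trans (h x)) ⟨i, hi⟩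
    (mem_univ _)

theorem Subalgebra.eq_zero_of_mulLeftRightEval_eq_zero {S : Subalgebra (Subring.center D) D}
    [IsMulCommutative S] {a : D} {P : S[X]} (hP : S.mulLeftRightEval a P = 0)
    (hdeg : P.natDegree < (minpoly (Subring.center D) a).natDegree) : P = 0 := by
  refine Polynomial.ext fun i => ?_
  rw [coeff_zero]
  rcases lt_or_ge i (minpoly (Subring.center D) a).natDegree with hi | hi
  · refine Subtype.ext (eq_zero_of_forall_sum_pow_mul_mul_eq_zero a (c := fun i => P.coeff i)
      (fun x => ?_) i hi)
    rw [← mulLeftRightEval_apply hdeg, hP, LinearMap.zero_apply]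
  · exact coeff_eq_zero_of_natDegree_lt (hdeg.trans_le hi)

open scoped IsMulCommutative in
theorem exists_mul_sub_mul_ne_zero_commute {a : D} (hint : IsIntegral (Subring.center D) a)
    (hroot : aeval a (derivative (minpoly (Subring.center D) a)) = 0) :
    ∃ y : D, a * y - y * a ≠ 0 ∧ Commute a (a * y - y * a) := by
  set F := Subring.center D
  set K := Algebra.adjoin F {a}
  set α : K := ⟨a, Algebra.self_mem_adjoin_singleton F a⟩
  set Φ := K.mulLeftRightEval a
  set m := (minpoly F a).map (algebraMap F K) with hm
  have hmonic : m.Monic := (minpoly.monic hint).map _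
  have isRoot_map (p : F[X]) (hp : aeval a p = 0) : (p.map (algebraMap F K)).IsRoot α := by
    rw [IsRoot, eval_map_algebraMap]
    exact Subtype.ext ((aeval_algHom_apply K.val α p).symm.trans hp)
  obtain ⟨r, hr⟩ : (X - C α) ^ 2 ∣ m := by
    refine (le_rootMultiplicity_iff hmonic.ne_zero).1
      ((one_lt_rootMultiplicity_iff_isRoot hmonic.ne_zero).2 ⟨isRoot_map _ (minpoly.aeval F a),
        ?_⟩)
    rw [hm, derivative_map]
    exact isRoot_map _ hroot
  have hΦ : ∀ P y, Φ ((X - C α) * P) y = a * Φ P y - Φ P y * a := fun P y => by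
    rw [map_mul, Module.End.mul_apply, K.mulLeftRightEval_X_sub_C]
  have hΦm : Φ m = 0 := by
    rw [hm, K.mulLeftRightEval_map_algebraMap, minpoly.aeval, map_zero]
  set P := (X - C α) * r
  have hmP : m = (X - C α) * P := by rw [hr, pow_two, mul_assoc]
  have hP0 : P ≠ 0 := right_ne_zero_of_mul (hmP ▸ hmonic.ne_zero)
  have hdeg : P.natDegree < (minpoly F a).natDegree := by
    rw [← (minpoly.monic hint).natDegree_map (algebraMap F K), ← hm, hmP,
      natDegree_mul (X_sub_C_ne_zero α) hP0, natDegree_X_sub_C]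
    omega
  obtain ⟨x, hx⟩ : ∃ x, Φ P x ≠ 0 := by
    by_contra! h
    exact hP0 (K.eq_zero_of_mulLeftRightEval_eq_zero (LinearMap.ext h) hdeg)
  refine ⟨Φ r x, hΦ r x ▸ hx, sub_eq_zero.1 ?_⟩
  rw [← hΦ, ← hΦ, ← hmP, hΦm, LinearMap.zero_apply]

end DivisionRing

/-- Let `D` be a division ring with center `F`. If `a ∈ D` is algebraic over `F` with
inseparable minimal polynomial, then there exists `b ∈ D` with `a * b - b * a = 1`. -/
theorem stmt14 {D : Type*} [DivisionRing D] (a : D)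
    (hint : IsIntegral (Subring.center D) a)
    (hinsep : ¬(minpoly (Subring.center D) a).Separable) :
    ∃ b : D, a * b - b * a = 1 := by
  have hder : derivative (minpoly (Subring.center D) a) = 0 := by
    by_contra h
    exact hinsep ((separable_iff_derivative_ne_zero (minpoly.irreducible hint)).2 h)
  obtain ⟨y, hy, hc⟩ := exists_mul_sub_mul_ne_zero_commute hint (by rw [hder, map_zero])
  exact exists_mul_sub_mul_eq_one_of_commute hy hc
end

section
/- Let D be a division ring with center F and K a maximal subfield of D that is algebraic of bounded degree n over F, where n is attained and char F does not divide n (in particular this holds if char F = 0). If every element of K \ F is separable over F, then K = F(a) for an element a of degree n, dim_F K = n, and D is finite-dimensional over F. -/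
/-!
Every element of `K` is separable of degree at most `n = deg a` over `F`, so for `b ∈ K` the
field `F(a, b)` has a primitive element of degree `≤ n`; hence `F(a, b) = F(a)` and `K = F[a]`
has dimension `n`. In particular every `d` commuting with `a` commutes with `K`, so lies in `K`
by maximality.

For finiteness of `D`, let `D[X]` act on `D` by `∑ dᵢ Xⁱ ↦ (z ↦ ∑ dᵢ z aⁱ)`. Then `D` is a simple
module whose endomorphisms are the right multiplications by elements of `C_D(a) = K`. By the
Jacobson density theorem, on any `m` right `K`-independent elements this action realises every
`m`-tuple of values, and modulo the minimal polynomial of `a` it does so with polynomials of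
degree `< n`. Comparing dimensions over `D` gives `m ≤ n`, so `dim_K D ≤ n` and
`dim_F D ≤ n²`.
-/

open Polynomial

theorem LinearIndependent.exists_linearMap_apply_eq {K V V' ι : Type*} [DivisionRing K]
    [AddCommGroup V] [Module K V] [AddCommGroup V'] [Module K V'] {v : ι → V}
    (hv : LinearIndependent K v) (y : ι → V') : ∃ g : V →ₗ[K] V', ∀ i, g (v i) = y i := by
  obtain ⟨g₀, hg₀⟩ := (Finsupp.linearCombination K v).exists_leftInverse_of_injective
    (LinearMap.ker_eq_bot.mpr hv)
  refine ⟨Finsupp.linearCombination K y ∘ₗ g₀, fun i => ?_⟩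
  have h : g₀ (v i) = Finsupp.single i 1 := by simpa using congr($hg₀ (Finsupp.single i 1))
  simp [h]

open IntermediateField in
theorem IntermediateField.adjoin_simple_eq_top_of_natDegree_minpoly_le {F L : Type*} [Field F]
    [Field L] [Algebra F L] [Algebra.IsSeparable F L] {a : L}
    (h : ∀ b : L, (minpoly F b).natDegree ≤ (minpoly F a).natDegree) : F⟮a⟯ = ⊤ := by
  refine eq_top_iff.mpr fun b _ => ?_
  have hint (x : L) : IsIntegral F x := Algebra.IsSeparable.isIntegral F x
  have : FiniteDimensional F F⟮a, b⟯ := finiteDimensional_adjoin fun x _ => hint x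
  obtain ⟨c, hc⟩ := Field.exists_primitive_element F F⟮a, b⟯
  have hab : F⟮a⟯ = F⟮a, b⟯ := by
    refine eq_of_le_of_finrank_le (adjoin.mono _ _ _ (by simp)) ?_
    rw [adjoin.finrank (hint a), ← (Field.primitive_element_iff_minpoly_natDegree_eq F c).mp hc,
      minpoly_eq]
    exact h c
  exact hab ▸ subset_adjoin F _ (by simp)

section RightAEval

variable {D : Type*} [DivisionRing D]

theorem AddMonoid.End.commute_toAddMonoidEnd_mulRight (d a : D) :
    Commute (Module.toAddMonoidEnd D D d) (AddMonoid.End.mulRight a) :=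
  AddMonoidHom.ext fun z => (mul_assoc d z a).symm

noncomputable def rightAEval (a : D) : D[X] →+* AddMonoid.End D :=
  eval₂RingHom' _ _ (AddMonoid.End.commute_toAddMonoidEnd_mulRight · a)

namespace rightAEval

variable {a : D}

theorem apply_eq_sum {p : D[X]} {n : ℕ} (hp : p.natDegree < n) (z : D) :
    rightAEval a p z = ∑ i ∈ Finset.range n, p.coeff i * z * a ^ i := by
  rw [rightAEval, eval₂RingHom'_apply, eval₂_eq_sum_range' _ hp]
  refine (AddMonoidHom.finsetSum_apply _ _ z).trans (Finset.sum_congr rfl fun i _ => ?_)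
  change p.coeff i * (AddMonoid.End.mulRight a ^ i) z = _
  rw [AddMonoid.End.coe_pow, mul_assoc]
  exact congr_arg _ (congr_fun (mul_right_iterate a i) z)

theorem C_apply (d z : D) : rightAEval a (C d) z = d * z := by
  rw [rightAEval, eval₂RingHom'_apply, eval₂_C]
  rfl

theorem X_apply (z : D) : rightAEval a X z = z * a := by
  rw [rightAEval, eval₂RingHom'_apply, eval₂_X]
  rfl

theorem map_minpoly (R : Type*) [CommRing R] [Algebra R D] (a : D) :
    rightAEval a ((minpoly R a).map (algebraMap R D)) = 0 := by
  ext z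
  rw [apply_eq_sum (Nat.lt_succ_of_le (natDegree_map_le)), AddMonoid.End.zero_apply,
    ← mul_zero z, ← minpoly.aeval R a, aeval_eq_sum_range, Finset.mul_sum]
  refine Finset.sum_congr rfl fun i _ => ?_
  rw [coeff_map, Algebra.commutes, Algebra.smul_def, mul_assoc]

instance isSimpleModule_range : IsSimpleModule (rightAEval a).range D :=
  isSimpleModule_iff_toSpanSingleton_surjective.mpr ⟨inferInstance, fun x hx y =>
    ⟨⟨rightAEval a (C (y * x⁻¹)), _, rfl⟩, by simp [Subring.smul_def, C_apply, hx]⟩⟩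

theorem end_apply_eq_mul_apply_one (φ : Module.End (rightAEval a).range D) (z : D) :
    φ z = z * φ 1 := by
  have h := φ.map_smul ⟨rightAEval a (C z), _, rfl⟩ 1
  simpa [Subring.smul_def, C_apply] using h

theorem commute_end_apply_one (φ : Module.End (rightAEval a).range D) :
    Commute (φ 1) a := by
  have h := φ.map_smul ⟨rightAEval a X, _, rfl⟩ 1
  simp only [Subring.smul_def, AddMonoid.End.smul_def, X_apply, one_mul] at h
  rw [end_apply_eq_mul_apply_one] at h
  exact h.symm

end rightAEval

variable {a : D} {K : Type*}

theorem exists_rightAEval_eq_on_finset [Semiring K] [Module K D] [SMulCommClass D K D]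
    (hC : ∀ d : D, Commute d a → ∃ k : K, k • (1 : D) = d) (g : D →ₗ[K] D) (s : Finset D) :
    ∃ p : D[X], ∀ z ∈ s, g z = rightAEval a p z := by
  have hφ (φ : Module.End (rightAEval a).range D) : ∃ k : K, ∀ z, φ z = k • z := by
    obtain ⟨k, hk⟩ := hC _ (rightAEval.commute_end_apply_one φ)
    refine ⟨k, fun z => ?_⟩
    rw [rightAEval.end_apply_eq_mul_apply_one, ← hk, ← smul_eq_mul, smul_comm, smul_eq_mul, mul_one]
  let f : Module.End (Module.End (rightAEval a).range D) D :=
    { toFun := g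
      map_add' := g.map_add
      map_smul' := fun φ z => by
        obtain ⟨k, hk⟩ := hφ φ
        simp only [Module.End.smul_def, hk, map_smul, RingHom.id_apply] }
  obtain ⟨⟨_, p, rfl⟩, hp⟩ := jacobson_density f s
  exact ⟨p, hp⟩

theorem exists_sum_mul_pow_eq_on_finset (R : Type*) [CommRing R] [Algebra R D]
    (ha : IsIntegral R a) [Semiring K] [Module K D] [SMulCommClass D K D]
    (hC : ∀ d : D, Commute d a → ∃ k : K, k • (1 : D) = d) (g : D →ₗ[K] D) (s : Finset D) :
    ∃ e : Fin (minpoly R a).natDegree → D, ∀ z ∈ s, g z = ∑ i, e i * z * a ^ (i : ℕ) := by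
  obtain ⟨p, hp⟩ := exists_rightAEval_eq_on_finset hC g s
  set q := (minpoly R a).map (algebraMap R D)
  have hq : q.Monic := (minpoly.monic ha).map _
  have hqdeg : q.natDegree = (minpoly R a).natDegree := (minpoly.monic ha).natDegree_map _
  have hq1 : q ≠ 1 := fun h => (minpoly.natDegree_pos ha).ne' (by rw [← hqdeg, h, natDegree_one])
  have hpq : rightAEval a p = rightAEval a (p %ₘ q) := by
    conv_lhs => rw [← modByMonic_add_div p q]
    rw [map_add, map_mul, rightAEval.map_minpoly, zero_mul, add_zero]
  refine ⟨fun i => (p %ₘ q).coeff i, fun z hz => ?_⟩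
  rw [hp z hz, hpq, rightAEval.apply_eq_sum (hqdeg ▸ natDegree_modByMonic_lt p hq hq1),
    ← Fin.sum_univ_eq_sum_range (fun i => (p %ₘ q).coeff i * z * a ^ i)]

theorem rank_le_natDegree_minpoly (R : Type*) [CommRing R] [Algebra R D] (ha : IsIntegral R a)
    [DivisionRing K] [Module K D] [SMulCommClass D K D]
    (hC : ∀ d : D, Commute d a → ∃ k : K, k • (1 : D) = d) :
    Module.rank K D ≤ (minpoly R a).natDegree := by
  refine rank_le fun s hs => ?_
  let Φ : (Fin (minpoly R a).natDegree → D) →ₗ[D] (s → D) :=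
    { toFun := fun e z => ∑ i, e i * z * a ^ (i : ℕ)
      map_add' := fun e f => funext fun z => by simp [add_mul, Finset.sum_add_distrib]
      map_smul' := fun d e => funext fun z => by simp [Finset.mul_sum, mul_assoc] }
  have hΦ : Function.Surjective Φ := fun y => by
    obtain ⟨g, hg⟩ := hs.exists_linearMap_apply_eq y
    obtain ⟨e, he⟩ := exists_sum_mul_pow_eq_on_finset R ha hC g s
    exact ⟨e, funext fun z => (he z z.2).symm.trans (hg z)⟩
  simpa using LinearMap.rank_le_of_surjective Φ hΦ

end RightAEval

namespace Subfield

variable {D : Type*} [DivisionRing D] (K : Subfield D)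

abbrev fieldOfComm (hK : ∀ x ∈ K, ∀ y ∈ K, x * y = y * x) : Field K :=
  { (inferInstance : DivisionRing K) with mul_comm := fun x y => Subtype.ext (hK x x.2 y y.2) }

abbrev algebraCenter (hFK : ∀ z ∈ Subring.center D, z ∈ K) : Algebra (Subring.center D) K :=
  ((Subring.center D).subtype.codRestrict K fun z => hFK z z.2).toAlgebra' fun c x =>
    Subtype.ext (Subring.mem_center_iff.mp c.2 x).symm

open IntermediateField in
theorem subset_adjoin_and_finrank_span_eq (hK : ∀ x ∈ K, ∀ y ∈ K, x * y = y * x)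
    (hFK : ∀ z ∈ Subring.center D, z ∈ K) {a : D} (ha : a ∈ K)
    (hsep : ∀ b ∈ K, IsSeparable (Subring.center D) b)
    (hdeg : ∀ b ∈ K, (minpoly (Subring.center D) b).natDegree ≤
      (minpoly (Subring.center D) a).natDegree) :
    (K : Set D) ⊆ Algebra.adjoin (Subring.center D) {a} ∧
      Module.finrank (Subring.center D) (Submodule.span (Subring.center D) (K : Set D)) =
        (minpoly (Subring.center D) a).natDegree := by
  let := K.fieldOfComm hK
  let := K.algebraCenter hFK
  let ι : K →ₐ[Subring.center D] D := { K.subtype with commutes' := fun _ => rfl }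
  have hmin (b : K) : minpoly (Subring.center D) b = minpoly (Subring.center D) (b : D) :=
    (minpoly.algHom_eq ι Subtype.val_injective b).symm
  have : Algebra.IsSeparable (Subring.center D) K :=
    ⟨fun b => by rw [IsSeparable, hmin]; exact hsep b b.2⟩
  have htop : (Subring.center D)⟮(⟨a, ha⟩ : K)⟯ = ⊤ :=
    adjoin_simple_eq_top_of_natDegree_minpoly_le fun b => by
      rw [hmin, hmin]; exact hdeg b b.2
  constructor
  · intro x hx
    have hx' : (⟨x, hx⟩ : K) ∈ Algebra.adjoin (Subring.center D) {⟨a, ha⟩} := by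
      rw [← adjoin_toSubalgebra, htop]; trivial
    have hmap := (Subalgebra.mem_map (f := ι)).mpr ⟨_, hx', rfl⟩
    rwa [AlgHom.map_adjoin, Set.image_singleton] at hmap
  · have hspan : Submodule.span (Subring.center D) (K : Set D) = LinearMap.range ι.toLinearMap := by
      rw [← Submodule.span_eq (LinearMap.range ι.toLinearMap), LinearMap.coe_range]
      exact congrArg _ Subtype.range_coe.symm
    rw [hspan, LinearMap.finrank_range_of_inj Subtype.val_injective, ← finrank_top', ← htop,
      adjoin.finrank (Algebra.IsSeparable.isIntegral _ _), hmin]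

theorem mem_closure_center_union_of_mem_adjoin {s : Set D} {x : D}
    (hx : x ∈ Algebra.adjoin (Subring.center D) s) :
    x ∈ closure ((Subring.center D : Set D) ∪ s) := by
  induction hx using Algebra.adjoin_induction with
  | mem x hx => exact subset_closure (Or.inr hx)
  | algebraMap r => exact subset_closure (Or.inl r.2)
  | add x y _ _ hx hy => exact add_mem hx hy
  | mul x y _ _ hx hy => exact mul_mem hx hy

theorem finiteDimensional_center_of_commute_mem {a : D} (ha : IsIntegral (Subring.center D) a)
    (hcent : ∀ d : D, Commute d a → d ∈ K)
    [FiniteDimensional (Subring.center D) (Submodule.span (Subring.center D) (K : Set D))] :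
    FiniteDimensional (Subring.center D) D := by
  let := K.algebraCenter fun z hz => hcent z (Subring.mem_center_iff.mp hz a).symm
  -- `K` acts on `D` by right multiplication; `Kᵐᵒᵖ` keeps this apart from the left action.
  let : Module Kᵐᵒᵖ D := Module.compHom D (RingHom.op K.subtype)
  have : SMulCommClass D Kᵐᵒᵖ D := ⟨fun d k z => (mul_assoc d z k.unop).symm⟩
  have : IsScalarTower (Subring.center D) Kᵐᵒᵖ D := ⟨fun f k z => by
    change z * (f * k.unop) = f * (z * k.unop)
    rw [← mul_assoc, ← mul_assoc, Subring.mem_center_iff.mp f.2 z]⟩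
  have : Module.Finite Kᵐᵒᵖ D := Module.rank_lt_aleph0_iff.mp <|
    (rank_le_natDegree_minpoly _ ha fun d hd => ⟨.op ⟨d, hcent d hd⟩, one_mul d⟩).trans_lt
      Cardinal.natCast_lt_aleph0
  let ι : K →ₗ[Subring.center D] D :=
    { toFun := Subtype.val, map_add' := fun _ _ => rfl, map_smul' := fun _ _ => rfl }
  have : Module.Finite (Subring.center D) K :=
    Module.Finite.of_injective (ι.codRestrict _ fun x => Submodule.subset_span x.2)
      fun x y h => Subtype.ext (Subtype.ext_iff.mp h :)
  have : Module.Finite (Subring.center D) Kᵐᵒᵖ :=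
    Module.Finite.equiv (MulOpposite.opLinearEquiv _)
  exact Module.Finite.trans Kᵐᵒᵖ D

end Subfield

theorem stmt16_general {D : Type*} [DivisionRing D] (K : Subfield D)
    (hcomm : ∀ x ∈ K, ∀ y ∈ K, x * y = y * x)
    (hmax : ∀ d : D, (∀ x ∈ K, d * x = x * d) → d ∈ K)
    (n : ℕ) (hn : 0 < n)
    (hbdd : ∀ a ∈ K, (minpoly (Subring.center D) a).natDegree ≤ n)
    (a : D) (haK : a ∈ K) (hdeg : (minpoly (Subring.center D) a).natDegree = n)
    (hsep : ∀ b ∈ K, b ∉ Subring.center D → (minpoly (Subring.center D) b).Separable) :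
    (∀ x ∈ K, x ∈ Subfield.closure ((Subring.center D : Set D) ∪ {a})) ∧
    Module.finrank (Subring.center D)
      (Submodule.span (Subring.center D) (K : Set D)) = n ∧
    FiniteDimensional (Subring.center D) D := by
  have hFK : ∀ z ∈ Subring.center D, z ∈ K := fun z hz =>
    hmax z fun x _ => (Subring.mem_center_iff.mp hz x).symm
  have hsepK : ∀ b ∈ K, IsSeparable (Subring.center D) b := fun b hb => by
    by_cases hbF : b ∈ Subring.center D
    · exact isSeparable_algebraMap (⟨b, hbF⟩ : Subring.center D)
    · exact hsep b hb hbF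
  obtain ⟨hKa, hfinrank⟩ :=
    K.subset_adjoin_and_finrank_span_eq hcomm hFK haK hsepK fun b hb => hdeg ▸ hbdd b hb
  have hcent (d : D) (hd : Commute d a) : d ∈ K :=
    hmax d fun x hx => Algebra.commute_of_mem_adjoin_singleton_of_commute (hKa hx) hd
  have : FiniteDimensional (Subring.center D) (Submodule.span (Subring.center D) (K : Set D)) :=
    Module.finite_of_finrank_pos (by rw [hfinrank, hdeg]; exact hn)
  exact ⟨fun x hx => Subfield.mem_closure_center_union_of_mem_adjoin (hKa hx),
    hdeg ▸ hfinrank, K.finiteDimensional_center_of_commute_mem (hsepK a haK).isIntegral hcent⟩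

/-- Let `D` be a division ring with center `F` and `K` a maximal subfield of `D` that is
algebraic of bounded degree `n` over `F`, with `n` attained by some `a ∈ K` and
`char F ∤ n`. If every element of `K \ F` is separable over `F`, then `K = F(a)`,
`dim_F K = n`, and `D` is finite dimensional over `F`. -/
theorem stmt16 {D : Type*} [DivisionRing D] (K : Subfield D)
    (hcomm : ∀ x ∈ K, ∀ y ∈ K, x * y = y * x)
    (hmax : ∀ d : D, (∀ x ∈ K, d * x = x * d) → d ∈ K)
    (n : ℕ) (hn : 0 < n)
    (halgK : ∀ a ∈ K, IsAlgebraic (Subring.center D) a)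
    (hbdd : ∀ a ∈ K, (minpoly (Subring.center D) a).natDegree ≤ n)
    (a : D) (haK : a ∈ K) (hdeg : (minpoly (Subring.center D) a).natDegree = n)
    (hchar : ¬(ringChar D ∣ n))
    (hsep : ∀ b ∈ K, b ∉ Subring.center D → (minpoly (Subring.center D) b).Separable) :
    (∀ x ∈ K, x ∈ Subfield.closure ((Subring.center D : Set D) ∪ {a})) ∧
    Module.finrank (Subring.center D)
      (Submodule.span (Subring.center D) (K : Set D)) = n ∧
    FiniteDimensional (Subring.center D) D :=
  stmt16_general K hcomm hmax n hn hbdd a haK hdeg hsep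
end
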